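/- arXiv:1107.5783 — 7 statements merged into one kernel-verified Lean document; each statement's English description precedes it below -/
import Mathlib

section
/- Let F : X → Y be a flat map, i.e., for every v ∈ V_X the projected restriction F_v : W_X → W_Y, F_v(w) = P_Y F(w+v), is a C¹ diffeomorphism. Then the map Φ : W_Y × V_X → W_X × V_X given by Φ(z,v) = ((F_v)⁻¹(z), v) is a C¹ diffeomorphism. -/
/- Product model of the Banach space decompositions `X = W_X ⊕ V_X` and
`Y = W_Y ⊕ V_Y`: `X = W × V`, `Y = W' × V'`, with `P_X = Prod.fst`,
`Q_X = Prod.snd`, `P_Y = Prod.fst`, `Q_Y = Prod.snd`. -/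
variable {W V W' V' : Type*}
  [NormedAddCommGroup W] [NormedSpace ℝ W] [CompleteSpace W]
  [NormedAddCommGroup V] [NormedSpace ℝ V] [CompleteSpace V]
  [NormedAddCommGroup W'] [NormedSpace ℝ W'] [CompleteSpace W']
  [NormedAddCommGroup V'] [NormedSpace ℝ V'] [CompleteSpace V']

/-- The projected restriction `F_v : W_X → W_Y`, `F_v(w) = P_Y F(w + v)`. -/
def projRestr (F : W × V → W' × V') (v : V) : W → W' := fun w => (F (w, v)).1

/-- `F` is a flat `C¹` map, with `G v` the inverse of the projected restriction
`F_v`: each `F_v : W_X → W_Y` is a `C¹` diffeomorphism. -/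
def IsFlat (F : W × V → W' × V') (G : V → W' → W) : Prop :=
  ContDiff ℝ 1 F ∧
  ∀ v : V, ContDiff ℝ 1 (projRestr F v) ∧ ContDiff ℝ 1 (G v) ∧
    Function.LeftInverse (G v) (projRestr F v) ∧
    Function.RightInverse (G v) (projRestr F v)

/-!
`Φ` is the two-sided inverse of `Ψ(w, v) = (F_v w, v)`, which is `C¹` because `F` is. The
derivative of `Ψ` is block triangular, `(dw, dv) ↦ (DF_v dw + ∂_v (P_Y F) dv, dv)`, with
invertible diagonal blocks: `DF_v` is invertible because `F_v` has a differentiable inverse.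
So the inverse function theorem makes `Φ` agree with a `C¹` local inverse of `Ψ` near
every point.
-/

open Function ContinuousLinearMap

section General

variable {𝕜 : Type*} [NontriviallyNormedField 𝕜]
  {E F V : Type*} [NormedAddCommGroup E] [NormedSpace 𝕜 E] [NormedAddCommGroup F]
  [NormedSpace 𝕜 F] [NormedAddCommGroup V] [NormedSpace 𝕜 V]

theorem HasFDerivAt.comp_eq_id_of_leftInverse {f : E → F} {g : F → E} {f' : E →L[𝕜] F}
    {g' : F →L[𝕜] E} {x : E} (hf : HasFDerivAt f f' x) (hg : HasFDerivAt g g' (f x))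
    (hgf : LeftInverse g f) : g' ∘L f' = .id 𝕜 E := by
  have hcomp : HasFDerivAt (g ∘ f) (g' ∘L f') x := hg.comp x hf
  rw [hgf.comp_eq_id] at hcomp
  exact hcomp.unique (hasFDerivAt_id x)

theorem HasFDerivAt.isInvertible_of_leftInverse_of_rightInverse {f : E → F} {g : F → E}
    {f' : E →L[𝕜] F} {g' : F →L[𝕜] E} {x : E} (hf : HasFDerivAt f f' x)
    (hg : HasFDerivAt g g' (f x)) (hgf : LeftInverse g f) (hfg : RightInverse g f) :
    f'.IsInvertible := by
  have hf_at_g : HasFDerivAt f f' (g (f x)) := by rwa [hgf x]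
  exact .of_inverse (hg.comp_eq_id_of_leftInverse hf_at_g hfg)
    (hf.comp_eq_id_of_leftInverse hg hgf)

theorem ContinuousLinearMap.IsInvertible.prod_snd {L : E × V →L[𝕜] F}
    (hL : (L ∘L inl 𝕜 E V).IsInvertible) : (L.prod (snd 𝕜 E V)).IsInvertible := by
  obtain ⟨A, hA⟩ := hL
  refine ⟨(ContinuousLinearEquiv.prodComm 𝕜 E V).trans
    (((ContinuousLinearEquiv.refl 𝕜 V).skewProd A (L ∘L inr 𝕜 E V)).trans
      (ContinuousLinearEquiv.prodComm 𝕜 V F)), ext fun p => Prod.ext ?_ rfl⟩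
  change A p.1 + (L ∘L inr 𝕜 E V) p.2 = L p
  rw [← L.comp_inl_add_comp_inr p, ← hA]
  rfl

theorem ContDiffAt.contDiffAt_leftInverse {𝕂 : Type*} [RCLike 𝕂] {E F : Type*}
    [NormedAddCommGroup E] [NormedSpace 𝕂 E] [CompleteSpace E] [NormedAddCommGroup F]
    [NormedSpace 𝕂 F] {n : WithTop ℕ∞} {f : E → F} {g : F → E} {f' : E →L[𝕂] F} {a : E}
    (hf : ContDiffAt 𝕂 n f a) (hf' : HasFDerivAt f f' a) (hinv : f'.IsInvertible) (hn : n ≠ 0)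
    (hgf : LeftInverse g f) : ContDiffAt 𝕂 n g (f a) := by
  obtain ⟨e, rfl⟩ := hinv
  refine (hf.to_localInverse hf' hn).congr_of_eventuallyEq ?_
  filter_upwards [(hf.hasStrictFDerivAt' hf' hn).eventually_right_inverse] with y hy
  calc g y = g (f (hf.localInverse hf' hn y)) := congrArg g hy.symm
    _ = hf.localInverse hf' hn y := hgf _

end General

theorem IsFlat.exists_hasFDerivAt_isInvertible {W V W' V' : Type*}
    [NormedAddCommGroup W] [NormedSpace ℝ W] [NormedAddCommGroup V] [NormedSpace ℝ V]
    [NormedAddCommGroup W'] [NormedSpace ℝ W'] [NormedAddCommGroup V'] [NormedSpace ℝ V']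
    {F : W × V → W' × V'} {G : V → W' → W} (hF : IsFlat F G) (q : W × V) :
    ∃ T : W × V →L[ℝ] W' × V, T.IsInvertible ∧
      HasFDerivAt (fun q : W × V => (projRestr F q.2 q.1, q.2)) T q := by
  obtain ⟨w, v⟩ := q
  obtain ⟨hFc, hFv⟩ := hF
  obtain ⟨-, hG_v, hGF, hFG⟩ := hFv v
  have hD : HasFDerivAt (fun q => (F q).1) (fst ℝ W' V' ∘L fderiv ℝ F (w, v)) (w, v) :=
    ((hFc.differentiable one_ne_zero _).hasFDerivAt).fst
  have hpartial : HasFDerivAt (projRestr F v)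
      ((fst ℝ W' V' ∘L fderiv ℝ F (w, v)) ∘L inl ℝ W V) w :=
    HasFDerivAt.comp (g := fun q => (F q).1) w hD (hasFDerivAt_prodMk_left w v)
  have hG : HasFDerivAt (G v) _ (projRestr F v w) :=
    ((hG_v.differentiable one_ne_zero) _).hasFDerivAt
  exact ⟨_, (hpartial.isInvertible_of_leftInverse_of_rightInverse hG hGF hFG).prod_snd,
    hD.prodMk hasFDerivAt_snd⟩

/-- if `F` is flat then `Φ(z, v) = ((F_v)⁻¹ z, v)` is a `C¹`
diffeomorphism from `W_Y × V_X` onto `W_X × V_X`, with inverse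
`Ψ(w, v) = (F_v w, v)`. -/
theorem flat_changeOfVariables_diffeo (F : W × V → W' × V') (G : V → W' → W)
    (hF : IsFlat F G) :
    ContDiff ℝ 1 (fun p : W' × V => (G p.2 p.1, p.2)) ∧
    Function.Bijective (fun p : W' × V => (G p.2 p.1, p.2)) ∧
    ContDiff ℝ 1 (fun q : W × V => (projRestr F q.2 q.1, q.2)) ∧
    Function.LeftInverse (fun q : W × V => (projRestr F q.2 q.1, q.2))
      (fun p : W' × V => (G p.2 p.1, p.2)) ∧
    Function.RightInverse (fun q : W × V => (projRestr F q.2 q.1, q.2))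
      (fun p : W' × V => (G p.2 p.1, p.2)) := by
  set Φ : W' × V → W × V := fun p => (G p.2 p.1, p.2)
  set Ψ : W × V → W' × V := fun q => (projRestr F q.2 q.1, q.2)
  have hΨ : ContDiff ℝ 1 Ψ := (contDiff_fst.comp hF.1).prodMk contDiff_snd
  have hΨΦ : LeftInverse Ψ Φ := fun p => Prod.ext (((hF.2 p.2).2.2.2) p.1) rfl
  have hΦΨ : RightInverse Ψ Φ := fun q => Prod.ext (((hF.2 q.2).2.2.1) q.1) rfl
  have hΦ : ContDiff ℝ 1 Φ := contDiff_iff_contDiffAt.2 fun p => by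
    obtain ⟨T, hT, hΨT⟩ := hF.exists_hasFDerivAt_isInvertible (Φ p)
    simpa only [hΨΦ p] using hΨ.contDiffAt.contDiffAt_leftInverse hΨT hT one_ne_zero hΦΨ
  exact ⟨hΦ, ⟨hΨΦ.injective, hΦΨ.surjective⟩, hΨ, hΨΦ, hΦΨ⟩
end

section
/- Let F : X → Y be a flat map and g ∈ Y. Then the map H_g : V_X → X given by H_g(v) = v + (F_v)⁻¹(P_Y g) is a bijection from V_X onto the fiber α_g = F⁻¹(g + V_Y), with inverse given by the height map x ↦ Q_X x restricted to α_g. -/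
/- Product model of the Banach space decompositions `X = W_X ⊕ V_X` and
`Y = W_Y ⊕ V_Y`: `X = W × V`, `Y = W' × V'`, with `P_X = Prod.fst`,
`Q_X = Prod.snd`, `P_Y = Prod.fst`, `Q_Y = Prod.snd`. -/
variable {W V W' V' : Type*}
  [NormedAddCommGroup W] [NormedSpace ℝ W] [CompleteSpace W]
  [NormedAddCommGroup V] [NormedSpace ℝ V] [CompleteSpace V]
  [NormedAddCommGroup W'] [NormedSpace ℝ W'] [CompleteSpace W']
  [NormedAddCommGroup V'] [NormedSpace ℝ V'] [CompleteSpace V']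

/-- for a flat map `F` and `g ∈ Y`, the map
`H_g : V_X → X`, `H_g v = v + F_v⁻¹(P_Y g)` (here `v ↦ (G v g.1, v)`), is a
bijection from `V_X` onto the fiber `α_g = F⁻¹(g + V_Y)`, with inverse the
height map `x ↦ Q_X x` restricted to `α_g`. -/
theorem heightMap_bijection_fiber (F : W × V → W' × V') (G : V → W' → W)
    (hF : IsFlat F G) (g : W' × V') :
    Set.BijOn (fun v : V => ((G v g.1, v) : W × V)) Set.univ
      {x : W × V | (F x).1 = g.1} ∧
    (∀ x : W × V, (F x).1 = g.1 → (G x.2 g.1, x.2) = x) ∧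
    Function.LeftInverse (Prod.snd : W × V → V) (fun v : V => (G v g.1, v)) := by
  have hsection : ∀ x : W × V, (F x).1 = g.1 → (G x.2 g.1, x.2) = x := fun x hx =>
    Prod.ext (hx ▸ (hF.2 x.2).2.2.1 x.1) rfl
  have hmaps : Set.MapsTo (fun v : V => ((G v g.1, v) : W × V)) Set.univ
      {x : W × V | (F x).1 = g.1} := fun v _ => (hF.2 v).2.2.2 g.1
  have hinv : Set.InvOn Prod.snd (fun v : V => ((G v g.1, v) : W × V)) Set.univ
      {x : W × V | (F x).1 = g.1} := ⟨fun _ _ => rfl, hsection⟩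
  exact ⟨hinv.bijOn hmaps (Set.mapsTo_univ _ _), hsection, fun _ => rfl⟩
end

section
/- Let Φ : X → Y be a C¹ map between Banach spaces such that DΦ(u) is invertible for every u ∈ X and there exists C > 0 with ‖DΦ(u)h‖ ≥ C‖h‖ for all u, h ∈ X. Then Φ is a global C¹ diffeomorphism from X onto Y (Hadamard's global inversion theorem under a uniform coercivity bound). -/
/-!
By the inverse function theorem `Φ` is a local homeomorphism. The coercivity bound makes every
lift through `Φ` of a segment `t ↦ y₀ + t • v` Lipschitz with constant `‖v‖ / C`, so by
completeness a lift over `[0, τ)` has a limit at `τ` and can be continued past it: segments lift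
from every point, which gives surjectivity. For injectivity, join two points `a`, `b` of a fibre
by a path `γ` and lift the straight-line contraction of the loop `Φ ∘ γ` to `Φ a`; the endpoints
of the lifted segments depend continuously on the parameter and lie in the discrete fibre over
`Φ a`, so the lifts from `a` and from `b` end at the same point. The inverse of the resulting
homeomorphism is `C¹` because the derivatives are invertible.
-/

open Set unitInterval
open scoped NNReal

section PathLifting

variable {E X : Type*} [TopologicalSpace E] [TopologicalSpace X]

def IsLiftOn (p : E → X) (γ : ℝ → X) (e : E) (τ : ℝ) (c : ℝ → E) : Prop :=
  ContinuousOn c (Icc 0 τ) ∧ EqOn (p ∘ c) γ (Icc 0 τ) ∧ c 0 = e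

variable {p : E → X} {γ : ℝ → X} {e : E} {c c' : ℝ → E} {τ τ' : ℝ}

theorem IsLiftOn.eqOn [T2Space E] (hp : IsLocalHomeomorph p) (hc : IsLiftOn p γ e τ c)
    (hc' : IsLiftOn p γ e τ' c') (hττ' : τ ≤ τ') : EqOn c c' (Icc 0 τ) := fun _ ht =>
  have hsub : Icc 0 τ ⊆ Icc 0 τ' := Icc_subset_Icc_right hττ'
  (T2Space.isSeparatedMap p).eqOn_of_comp_eqOn hp.isLocallyInjective isPreconnected_Icc hc.1
    (hc'.1.mono hsub) (fun _ hs => (hc.2.1 hs).trans (hc'.2.1 (hsub hs)).symm)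
    (left_mem_Icc.2 (ht.1.trans ht.2)) (hc.2.2.trans hc'.2.2.symm) ht

theorem IsLiftOn.eqOn_const [T2Space E] (hp : IsLocalHomeomorph p) (hc : IsLiftOn p γ e τ c)
    (hγ : EqOn γ (fun _ => p e) (Icc 0 τ)) : EqOn c (fun _ => e) (Icc 0 τ) :=
  hc.eqOn hp ⟨continuousOn_const, fun _ ht => (hγ ht).symm, rfl⟩ le_rfl

theorem IsLiftOn.extend {q : OpenPartialHomeomorph E X} (hγ : Continuous γ)
    (hc : IsLiftOn q γ e τ c) (hτ : 0 ≤ τ) (hττ' : τ ≤ τ') (hcτ : c τ ∈ q.source)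
    (hγq : MapsTo γ (Icc τ τ') q.target) :
    IsLiftOn q γ e τ' (fun t => if t ≤ τ then c t else q.symm (γ t)) := by
  have hsymm : q.symm (γ τ) = c τ := by
    rw [← hc.2.1 (right_mem_Icc.2 hτ)]; exact q.left_inv hcτ
  refine ⟨?_, fun t ht => ?_, by simp only [hτ, if_true, hc.2.2]⟩
  · rw [← Icc_union_Icc_eq_Icc hτ hττ']
    refine ContinuousOn.union_of_isClosed ?_ ?_ isClosed_Icc isClosed_Icc
    · exact hc.1.congr fun t ht => if_pos ht.2
    · refine (q.continuousOn_symm.comp hγ.continuousOn hγq).congr fun t ht => ?_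
      split_ifs with h
      · rw [le_antisymm h ht.1]; exact hsymm.symm
      · rfl
  · dsimp only [Function.comp_apply]
    split_ifs with h
    · exact hc.2.1 ⟨ht.1, h⟩
    · exact q.right_inv (hγq ⟨(not_le.1 h).le, ht.2⟩)

end PathLifting

section PathLiftingMetric

variable {E X : Type*} [MetricSpace E] [TopologicalSpace X]
  {p : E → X} {γ : ℝ → X} {e : E} {c c' : ℝ → E} {τ τ' : ℝ} {K : ℝ≥0}

theorem IsLiftOn.dist_le (hp : IsLocalHomeomorph p)
    (hlip : ∀ τ c, IsLiftOn p γ e τ c → LipschitzOnWith K c (Icc 0 τ))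
    (hc : IsLiftOn p γ e τ c) (hc' : IsLiftOn p γ e τ' c') (hτ : 0 ≤ τ) (hτ' : 0 ≤ τ') :
    dist (c τ) (c' τ') ≤ K * dist τ τ' := by
  wlog h : τ ≤ τ' generalizing τ τ' c c'
  · rw [dist_comm, dist_comm τ]
    exact this hc' hc hτ' hτ (le_of_not_ge h)
  rw [hc.eqOn hp hc' h (right_mem_Icc.2 hτ)]
  exact (hlip _ _ hc').dist_le_mul τ ⟨hτ, h⟩ τ' (right_mem_Icc.2 hτ')

theorem IsLocalHomeomorph.exists_isLiftOn_of_lipschitzOnWith [CompleteSpace E] [T2Space X]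
    (hp : IsLocalHomeomorph p) (hγ : Continuous γ)
    (hlip : ∀ τ c, IsLiftOn p γ e τ c → LipschitzOnWith K c (Icc 0 τ)) (he : p e = γ 0) :
    ∃ c, IsLiftOn p γ e 1 c := by
  set S := {τ ∈ Icc (0 : ℝ) 1 | ∃ c, IsLiftOn p γ e τ c}
  have h0S : (0 : ℝ) ∈ S := ⟨left_mem_Icc.2 zero_le_one, fun _ => e, continuousOn_const,
    fun t ht => by rw [le_antisymm ht.2 ht.1]; exact he, rfl⟩
  have : Nonempty E := ⟨e⟩
  choose! lift hlift using fun τ (hτ : τ ∈ S) => hτ.2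
  have hend : LipschitzOnWith K (fun τ => lift τ τ) S := .of_dist_le_mul fun τ hτ τ' hτ' =>
    (hlift τ hτ).dist_le hp hlip (hlift τ' hτ') hτ.1.1 hτ'.1.1
  have hS : BddAbove S := ⟨1, fun τ hτ => hτ.1.2⟩
  obtain ⟨u, -, hu, huS⟩ := exists_seq_tendsto_sSup ⟨0, h0S⟩ hS
  -- The endpoints of the lifts over `[0, u n]` converge to some `x`; a chart at `x` continues
  -- the lift over `[0, u n]` past `sSup S`, which forces `sSup S = 1`.
  obtain ⟨x, hx⟩ := cauchySeq_tendsto_of_complete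
    (hend.cauchySeq_comp hu.cauchySeq (range_subset_iff.2 huS))
  have hpx : p x = γ (sSup S) := tendsto_nhds_unique ((hp.continuous.tendsto x).comp hx) <|
    ((hγ.tendsto _).comp hu).congr fun n =>
      ((hlift _ (huS n)).2.1 (right_mem_Icc.2 (huS n).1.1)).symm
  obtain ⟨q, hxq, rfl⟩ := hp x
  obtain ⟨η, hη, hηq⟩ := Metric.mem_nhds_iff.1 (hγ.continuousAt.preimage_mem_nhds
    (q.open_target.mem_nhds (hpx ▸ q.map_source hxq)))
  obtain ⟨n, hnq, hnη⟩ := ((hx.eventually (q.open_source.mem_nhds hxq)).and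
    (hu.eventually (Ioi_mem_nhds (sub_lt_self _ hη)))).exists
  have hunS : u n ≤ sSup S := le_csSup hS (huS n)
  set τ' := min (sSup S + η / 2) 1
  have hnτ' : u n ≤ τ' := le_min (by linarith) (huS n).1.2
  have hext := (hlift _ (huS n)).extend hγ (huS n).1.1 hnτ' hnq fun t ht => hηq <| by
      rw [Metric.mem_ball, Real.dist_eq, abs_lt]
      constructor <;> linarith [ht.1, ht.2, min_le_left (sSup S + η / 2) 1, hnη]
  have hτ'S : τ' ∈ S := ⟨⟨(huS n).1.1.trans hnτ', min_le_right _ _⟩, _, hext⟩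
  have hτ' : τ' = 1 := by
    have := le_csSup hS hτ'S
    simp only [τ', min_def] at this ⊢
    split_ifs at this ⊢ <;> linarith
  exact ⟨_, hτ' ▸ hext⟩

end PathLiftingMetric

section Segments

variable {E X : Type*} [TopologicalSpace E] [AddCommGroup X] [Module ℝ X]

def LiftsSegments (p : E → X) : Prop :=
  ∀ x v, ∃ c, IsLiftOn p (fun t : ℝ => p x + t • v) x 1 c

variable {p : E → X}

theorem LiftsSegments.surjective [Nonempty E] (hp : LiftsSegments p) :
    Function.Surjective p := fun y => by
  obtain ⟨x⟩ := ‹Nonempty E›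
  obtain ⟨c, -, hc, -⟩ := hp x (y - p x)
  exact ⟨c 1, by simpa using hc (right_mem_Icc.2 zero_le_one)⟩

theorem LiftsSegments.injective [T2Space E] [PathConnectedSpace E] [TopologicalSpace X]
    [IsTopologicalAddGroup X] [ContinuousSMul ℝ X] (hp : LiftsSegments p)
    (hloc : IsLocalHomeomorph p) : Function.Injective p := by
  intro a b hab
  let γ := PathConnectedSpace.somePath a b
  choose L hL using fun s : I => hp (γ s) (p a - p (γ s))
  have hpc := hloc.continuous
  -- `H` contracts the loop `p ∘ γ` to `p a` along segments, and `L` lifts it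
  let H : C(I × I, X) := ⟨fun ts => p (γ ts.2) + (ts.1 : ℝ) • (p a - p (γ ts.2)), by fun_prop⟩
  have hLc : Continuous fun ts : I × I => L ts.2 ts.1 :=
    hloc.continuous_lift (T2Space.isSeparatedMap p) H (funext fun ts => (hL ts.2).2.1 ts.1.2)
      (γ.continuous.congr fun s => (hL s).2.2.symm)
      (fun s => (hL s).1.comp_continuous continuous_subtype_val Subtype.prop)
  have hpL (s : I) : p (L s 1) = p a := by simpa using (hL s).2.1 (right_mem_Icc.2 zero_le_one)
  have hconst := (T2Space.isSeparatedMap p).const_of_comp hloc.isLocallyInjective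
    (hLc.comp (.prodMk_right 1)) (fun s s' => (hpL s).trans (hpL s').symm) 0 1
  have h0 : L 0 1 = a := by
    simpa using (hL 0).eqOn_const hloc (fun t _ => by simp) (right_mem_Icc.2 zero_le_one)
  have h1 : L 1 1 = b := by
    simpa using (hL 1).eqOn_const hloc (fun t _ => by simp [hab]) (right_mem_Icc.2 zero_le_one)
  exact h0.symm.trans (hconst.trans h1)

end Segments

section InverseFunction

variable {𝕜 X Y : Type*} [NontriviallyNormedField 𝕜] [NormedAddCommGroup X] [NormedSpace 𝕜 X]
  [CompleteSpace X] [NormedAddCommGroup Y] [NormedSpace 𝕜 Y] {Φ : X → Y}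

theorem HasStrictFDerivAt.hasDerivWithinAt_of_comp {f' : X ≃L[𝕜] Y} {c : 𝕜 → X} {s : Set 𝕜}
    {t : 𝕜} {v : Y} (hΦ : HasStrictFDerivAt Φ (f' : X →L[𝕜] Y) (c t))
    (hc : ContinuousWithinAt c s t) (hΦc : HasDerivWithinAt (Φ ∘ c) v s t) :
    HasDerivWithinAt c (f'.symm v) s t := by
  have hinv := hΦ.eventually_left_inverse
  exact (hΦ.to_localInverse.hasFDerivAt.comp_hasDerivWithinAt t hΦc).congr_of_eventuallyEq
    ((hc.tendsto.eventually hinv).mono fun _ h => h.symm) hinv.self_of_nhds.symm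

theorem isLocalHomeomorph_of_hasStrictFDerivAt {e : X → X ≃L[𝕜] Y}
    (hd : ∀ x, HasStrictFDerivAt Φ (e x : X →L[𝕜] Y) x) : IsLocalHomeomorph Φ := fun x =>
  ⟨(hd x).toOpenPartialHomeomorph Φ, (hd x).mem_toOpenPartialHomeomorph_source,
    (hd x).toOpenPartialHomeomorph_coe.symm⟩

end InverseFunction

section UniformlyCoercive

variable {X Y : Type*} [NormedAddCommGroup X] [NormedSpace ℝ X] [CompleteSpace X]
  [NormedAddCommGroup Y] [NormedSpace ℝ Y] {Φ : X → Y} {e : X → X ≃L[ℝ] Y} {C : ℝ}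

theorem lipschitzOnWith_of_comp_eqOn_affine (hd : ∀ x, HasStrictFDerivAt Φ (e x : X →L[ℝ] Y) x)
    (hC : 0 < C) (hb : ∀ x h, C * ‖h‖ ≤ ‖e x h‖) {c : ℝ → X} {s : Set ℝ} (hs : Convex ℝ s)
    (hc : ContinuousOn c s) {y₀ v : Y} (hΦc : EqOn (Φ ∘ c) (fun t => y₀ + t • v) s) :
    LipschitzOnWith (C⁻¹ * ‖v‖).toNNReal c s := by
  have haff (t : ℝ) : HasDerivAt (fun t : ℝ => y₀ + t • v) v t := by
    simpa using ((hasDerivAt_id t).smul_const v).const_add y₀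
  refine hs.lipschitzOnWith_of_nnnorm_hasDerivWithin_le (fun t ht =>
    (hd (c t)).hasDerivWithinAt_of_comp (hc t ht)
      ((haff t).hasDerivWithinAt.congr hΦc (hΦc ht))) fun t _ => ?_
  rw [Real.le_toNNReal_iff_coe_le (by positivity), coe_nnnorm, le_inv_mul_iff₀ hC]
  simpa using hb (c t) ((e (c t)).symm v)

theorem LiftsSegments.of_hasStrictFDerivAt (hd : ∀ x, HasStrictFDerivAt Φ (e x : X →L[ℝ] Y) x)
    (hC : 0 < C) (hb : ∀ x h, C * ‖h‖ ≤ ‖e x h‖) : LiftsSegments Φ := fun x v =>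
  (isLocalHomeomorph_of_hasStrictFDerivAt hd).exists_isLiftOn_of_lipschitzOnWith (by fun_prop)
    (fun τ _ hc => lipschitzOnWith_of_comp_eqOn_affine hd hC hb (convex_Icc 0 τ) hc.1 hc.2.1)
    (by simp)

end UniformlyCoercive

theorem hadamard_global_inversion_general {X Y : Type*}
    [NormedAddCommGroup X] [NormedSpace ℝ X] [CompleteSpace X]
    [NormedAddCommGroup Y] [NormedSpace ℝ Y]
    (Φ : X → Y) (hΦ : ContDiff ℝ 1 Φ)
    (hinv : ∀ u : X, ∃ e : X ≃L[ℝ] Y, (e : X →L[ℝ] Y) = fderiv ℝ Φ u)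
    (C : ℝ) (hC : 0 < C)
    (hbound : ∀ u h : X, C * ‖h‖ ≤ ‖fderiv ℝ Φ u h‖) :
    ∃ Ψ : Y → X, ContDiff ℝ 1 Ψ ∧
      Function.LeftInverse Ψ Φ ∧ Function.RightInverse Ψ Φ := by
  choose e he using hinv
  have hd (u : X) : HasStrictFDerivAt Φ (e u : X →L[ℝ] Y) u :=
    he u ▸ hΦ.contDiffAt.hasStrictFDerivAt one_ne_zero
  have hloc := isLocalHomeomorph_of_hasStrictFDerivAt hd
  have hseg : LiftsSegments Φ := .of_hasStrictFDerivAt hd hC fun u h => by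
    simpa only [← he u, ContinuousLinearEquiv.coe_coe] using hbound u h
  let H := hloc.toHomeomorphOfBijective ⟨hseg.injective hloc, hseg.surjective⟩
  exact ⟨H.symm, H.contDiff_symm (fun u => (hd u).hasFDerivAt) hΦ, H.symm_apply_apply,
    H.apply_symm_apply⟩

/-- Hadamard's global inversion theorem with a uniform coercivity
bound: if `Φ : X → Y` is a `C¹` map between Banach spaces whose derivative
`DΦ(u)` is invertible (as a continuous linear isomorphism) at every `u`, and
there is `C > 0` with `‖DΦ(u) h‖ ≥ C ‖h‖` for all `u, h`, then `Φ` is a global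
`C¹` diffeomorphism from `X` onto `Y`. -/
theorem hadamard_global_inversion {X Y : Type*}
    [NormedAddCommGroup X] [NormedSpace ℝ X] [CompleteSpace X]
    [NormedAddCommGroup Y] [NormedSpace ℝ Y] [CompleteSpace Y]
    (Φ : X → Y) (hΦ : ContDiff ℝ 1 Φ)
    (hinv : ∀ u : X, ∃ e : X ≃L[ℝ] Y, (e : X →L[ℝ] Y) = fderiv ℝ Φ u)
    (C : ℝ) (hC : 0 < C)
    (hbound : ∀ u h : X, C * ‖h‖ ≤ ‖fderiv ℝ Φ u h‖) :
    ∃ Ψ : Y → X, ContDiff ℝ 1 Ψ ∧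
      Function.LeftInverse Ψ Φ ∧ Function.RightInverse Ψ Φ :=
  hadamard_global_inversion_general Φ hΦ hinv C hC hbound
end

section
/- Let f be an appropriate function. Then the Nemytskii operator N_f : H¹(Ω) → L²(Ω) is continuously Fréchet differentiable, with derivative DN_f(u)z = ∂₂f(·,u(·)) z(·). -/
open MeasureTheory
open scoped ENNReal Classical

/-!
Factor `N` as the embedding `X → L^s` followed by the superposition operator
`v ↦ f(·, v) : L^s → L²`, and pick `r < ∞` with `1/2 = 1/r + 1/s`. The candidate derivative at `v`
is multiplication by the bounded function `∂₂f(·, v)`, which by Hölder maps `L^s → L²` with norm at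
most its `L^r` norm. Both the Fréchet remainder divided by `‖w‖_{L^s}` and the increment of the
derivative are then bounded by `L^r` norms of uniformly bounded functions that tend to `0` a.e.
along a.e.-convergent subsequences, so the bounded convergence theorem in `L^r` finishes both.
-/

open Filter Topology

theorem abs_sub_le_mul_abs_sub_of_hasDerivAt {g g' : ℝ → ℝ} {M : ℝ}
    (hg : ∀ t, HasDerivAt g (g' t) t) (hM : ∀ t, |g' t| ≤ M) (a b : ℝ) :
    |g a - g b| ≤ M * |a - b| := by
  simpa only [Real.norm_eq_abs] using Convex.norm_image_sub_le_of_norm_hasDerivWithin_le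
    (fun t _ => (hg t).hasDerivWithinAt) (fun t _ => hM t) convex_univ
    (Set.mem_univ b) (Set.mem_univ a)

theorem abs_sub_sub_mul_div_le_of_hasDerivAt {g g' : ℝ → ℝ} {M : ℝ}
    (hg : ∀ t, HasDerivAt g (g' t) t) (hM : ∀ t, |g' t| ≤ M) (a b : ℝ) :
    |(g b - g a - g' a * (b - a)) / (b - a)| ≤ 2 * M := by
  rcases eq_or_ne (b - a) 0 with hab | hab
  · have hM0 : 0 ≤ M := (abs_nonneg _).trans (hM a)
    simp only [hab, div_zero, abs_zero]
    positivity
  rw [abs_div, div_le_iff₀ (abs_pos.2 hab)]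
  calc |g b - g a - g' a * (b - a)| ≤ |g b - g a| + |g' a * (b - a)| := abs_sub _ _
    _ ≤ M * |b - a| + M * |b - a| := by
      rw [abs_mul]
      gcongr
      exacts [abs_sub_le_mul_abs_sub_of_hasDerivAt hg hM b a, hM a]
    _ = 2 * M * |b - a| := by ring

theorem HasDerivAt.tendsto_sub_sub_mul_div {ι : Type*} {l : Filter ι} {g : ℝ → ℝ} {g' a : ℝ}
    (hg : HasDerivAt g g' a) {t : ι → ℝ} (ht : Tendsto t l (𝓝 a)) :
    Tendsto (fun i => (g (t i) - g a - g' * (t i - a)) / (t i - a)) l (𝓝 0) := by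
  have hlo := (hasDerivAt_iff_isLittleO.1 hg).comp_tendsto ht
  simpa only [Function.comp_def, smul_eq_mul, mul_comm] using hlo.tendsto_div_nhds_zero

theorem ContDiffOn.continuousOn_partialDeriv_snd {E G : Type*} [NormedAddCommGroup E]
    [NormedSpace ℝ E] [NormedAddCommGroup G] [NormedSpace ℝ G] {f f' : E → ℝ → G} {U : Set E}
    (hU : IsOpen U) (hf : ContDiffOn ℝ 1 (fun p : E × ℝ => f p.1 p.2) (U ×ˢ Set.univ))
    (hf' : ∀ x ∈ U, ∀ t, HasDerivAt (f x) (f' x t) t) :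
    ContinuousOn (fun p : E × ℝ => f' p.1 p.2) (U ×ˢ Set.univ) := by
  have hUo : IsOpen (U ×ˢ Set.univ : Set (E × ℝ)) := hU.prod isOpen_univ
  have hfderiv : ∀ p ∈ U ×ˢ Set.univ,
      fderiv ℝ (fun p : E × ℝ => f p.1 p.2) p (0, 1) = f' p.1 p.2 := by
    intro p hp
    have hline : HasDerivAt (fun t : ℝ => (p.1, t)) ((0 : E), (1 : ℝ)) p.2 :=
      (hasDerivAt_const p.2 p.1).prodMk (hasDerivAt_id p.2)
    have hdiff := (hf.differentiableOn one_ne_zero).differentiableAt (hUo.mem_nhds hp)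
    have hcomp := hdiff.hasFDerivAt.comp_hasDerivAt p.2 hline
    exact hcomp.unique (hf' p.1 hp.1 p.2)
  refine ContinuousOn.congr ?_ fun p hp => (hfderiv p hp).symm
  exact ((ContinuousLinearMap.apply ℝ G ((0 : E), (1 : ℝ))).continuous.comp_continuousOn
    (hf.continuousOn_fderiv_of_isOpen hUo le_rfl))

theorem ENNReal.exists_holderTriple_of_lt {p q : ℝ≥0∞} (hqp : q < p) :
    ∃ r : ℝ≥0∞, r ≠ ∞ ∧ ENNReal.HolderTriple r p q := by
  have hinv : p⁻¹ < q⁻¹ := ENNReal.inv_lt_inv.2 hqp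
  refine ⟨(q⁻¹ - p⁻¹)⁻¹, by simpa using (tsub_pos_of_lt hinv).ne', ⟨?_⟩⟩
  rw [inv_inv, tsub_add_cancel_of_le hinv.le]

namespace MeasureTheory

variable {α : Type*} [MeasurableSpace α] {μ : Measure α}

def SuperpositionMeasurable (F : α → ℝ → ℝ) (μ : Measure α) : Prop :=
  ∀ ⦃v : α → ℝ⦄, AEStronglyMeasurable v μ → AEStronglyMeasurable (fun x => F x (v x)) μ

theorem _root_.ContinuousOn.superpositionMeasurable [TopologicalSpace α] [OpensMeasurableSpace α]
    {F : α → ℝ → ℝ} {S : Set α}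
    (hF : ContinuousOn (fun p : α × ℝ => F p.1 p.2) (S ×ˢ Set.univ))
    (hS : MeasurableSet S) (hμS : ∀ᵐ x ∂μ, x ∈ S) : SuperpositionMeasurable F μ := by
  intro v hv
  have hgraph : AEMeasurable (fun x => (x, v x)) μ :=
    measurable_id.aemeasurable.prodMk hv.aemeasurable
  have hSR : MeasurableSet (S ×ˢ Set.univ : Set (α × ℝ)) := hS.prod MeasurableSet.univ
  have hmem : ∀ᵐ p ∂μ.map (fun x => (x, v x)), p ∈ S ×ˢ (Set.univ : Set ℝ) :=
    (ae_map_iff hgraph hSR).2 (hμS.mono fun x hx => ⟨hx, trivial⟩)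
  have hFm := hF.aemeasurable (μ := μ.map fun x => (x, v x)) hSR
  rw [Measure.restrict_eq_self_of_ae_mem hmem] at hFm
  exact (hFm.comp_aemeasurable hgraph).aestronglyMeasurable

theorem Lp.tendsto_of_forall_ae_tendsto {E Y : Type*} [NormedAddCommGroup E] {p : ℝ≥0∞}
    [Fact (1 ≤ p)] {l : Filter Y} {Φ : Lp E p μ → Y} {v : Lp E p μ}
    (h : ∀ vs : ℕ → Lp E p μ, (∀ᵐ x ∂μ, Tendsto (fun k => vs k x) atTop (𝓝 (v x))) →
      Tendsto (fun k => Φ (vs k)) atTop l) :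
    Tendsto Φ (𝓝 v) l := by
  refine tendsto_iff_seq_tendsto.2 fun vs hvs => tendsto_of_subseq_tendsto fun ns hns => ?_
  obtain ⟨ms, -, hms⟩ := (tendstoInMeasure_of_tendsto_Lp (hvs.comp hns)).exists_seq_tendsto_ae
  exact ⟨ms, h _ hms⟩

theorem Lp.tendsto_zero_of_ae_bound [IsFiniteMeasure μ] {E : Type*} [NormedAddCommGroup E]
    {r : ℝ≥0∞} [Fact (1 ≤ r)] (hr : r ≠ ∞) {g : ℕ → Lp E r μ} (C : ℝ)
    (hbound : ∀ k, ∀ᵐ x ∂μ, ‖g k x‖ ≤ C)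
    (hlim : ∀ᵐ x ∂μ, Tendsto (fun k => g k x) atTop (𝓝 0)) :
    Tendsto g atTop (𝓝 0) := by
  have hui : UnifIntegrable (fun k => (g k : α → E)) r μ := by
    refine unifIntegrable_of Fact.out hr (fun k => Lp.aestronglyMeasurable _)
      fun _ _ => ⟨C.toNNReal + 1, fun k => ?_⟩
    have hzero : {x | C.toNNReal + 1 ≤ ‖g k x‖₊}.indicator (g k) =ᵐ[μ] 0 := by
      filter_upwards [hbound k] with x hx
      refine Set.indicator_of_notMem (fun hle => ?_) _
      have hle' : (C.toNNReal : ℝ) + 1 ≤ ‖g k x‖ := by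
        exact_mod_cast (hle : C.toNNReal + 1 ≤ ‖g k x‖₊)
      linarith [C.le_coe_toNNReal]
    simp [eLpNorm_congr_ae hzero]
  rw [Lp.tendsto_Lp_iff_tendsto_eLpNorm']
  have hconv := tendsto_Lp_finite_of_tendsto_ae Fact.out hr (fun k => Lp.aestronglyMeasurable _)
    (MemLp.zero (ε := E)) hui hlim
  exact hconv.congr fun k => eLpNorm_congr_ae (EventuallyEq.rfl.sub (Lp.coeFn_zero E r μ).symm)

theorem Lp.norm_le_mul_of_ae_eq_mul {p q r : ℝ≥0∞} [Fact (1 ≤ p)] [Fact (1 ≤ q)] [Fact (1 ≤ r)]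
    [ENNReal.HolderTriple r p q] {R : Lp ℝ q μ} {g : Lp ℝ r μ} {w : Lp ℝ p μ}
    (h : R =ᵐ[μ] fun x => g x * w x) : ‖R‖ ≤ ‖g‖ * ‖w‖ := by
  have hR : R = (ContinuousLinearMap.mul ℝ ℝ).holder q g w :=
    Lp.ext (h.trans ((ContinuousLinearMap.mul ℝ ℝ).coeFn_holder g w).symm)
  calc ‖R‖ ≤ ‖ContinuousLinearMap.mul ℝ ℝ‖ * ‖g‖ * ‖w‖ :=
        hR ▸ (ContinuousLinearMap.mul ℝ ℝ).norm_holder_apply_apply_le g w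
    _ ≤ 1 * ‖g‖ * ‖w‖ := by gcongr; exact ContinuousLinearMap.opNorm_mul_le ℝ ℝ
    _ = ‖g‖ * ‖w‖ := by rw [one_mul]

noncomputable def nemytskii (F : α → ℝ → ℝ) (q : ℝ≥0∞) (μ : Measure α) {p : ℝ≥0∞} (v : Lp ℝ p μ) :
    Lp ℝ q μ :=
  if h : MemLp (fun x => F x (v x)) q μ then h.toLp _ else 0

section Nemytskii

variable {F : α → ℝ → ℝ} {p q : ℝ≥0∞}

theorem coeFn_nemytskii {v : Lp ℝ p μ} (h : MemLp (fun x => F x (v x)) q μ) :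
    nemytskii F q μ v =ᵐ[μ] fun x => F x (v x) := by
  rw [nemytskii, dif_pos h]
  exact h.coeFn_toLp

theorem nemytskii_congr_ae {p' : ℝ≥0∞} {v : Lp ℝ p μ} {w : Lp ℝ p' μ} (h : v =ᵐ[μ] w) :
    nemytskii F q μ v = nemytskii F q μ w := by
  have hF : (fun x => F x (v x)) =ᵐ[μ] fun x => F x (w x) := h.mono fun x hx => congrArg (F x) hx
  unfold nemytskii
  split_ifs with hv hw hw
  · exact MemLp.toLp_congr hv hw hF
  · exact absurd (hv.ae_eq hF) hw
  · exact absurd (hw.ae_eq hF.symm) hv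
  · rfl

theorem memLp_superposition {M : ℝ} (hFm : SuperpositionMeasurable F μ)
    (hgrowth : ∀ᵐ x ∂μ, ∀ t, |F x t - F x 0| ≤ M * |t|) (hF0 : MemLp (fun x => F x 0) q μ)
    {v : α → ℝ} (hv : MemLp v q μ) : MemLp (fun x => F x (v x)) q μ := by
  have hdiff : MemLp (fun x => F x (v x) - F x 0) q μ :=
    hv.of_le_mul ((hFm hv.1).sub hF0.1) (hgrowth.mono fun x hx => hx (v x))
  exact (hdiff.add hF0).ae_eq (.of_forall fun _ => by simp)

theorem memLp_superposition_of_hasDerivAt {F' : α → ℝ → ℝ} {M : ℝ}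
    (hFm : SuperpositionMeasurable F μ) (hF0 : MemLp (fun x => F x 0) q μ)
    (hderiv : ∀ᵐ x ∂μ, ∀ t, HasDerivAt (F x) (F' x t) t) (hF'b : ∀ᵐ x ∂μ, ∀ t, |F' x t| ≤ M)
    {v : α → ℝ} (hv : MemLp v q μ) : MemLp (fun x => F x (v x)) q μ := by
  refine memLp_superposition (M := M) hFm ?_ hF0 hv
  filter_upwards [hderiv, hF'b] with x hd hb t
  simpa using abs_sub_le_mul_abs_sub_of_hasDerivAt hd hb t 0

theorem memLp_superposition_of_bound [IsFiniteMeasure μ] {M : ℝ} (hFm : SuperpositionMeasurable F μ)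
    (hFb : ∀ᵐ x ∂μ, ∀ t, |F x t| ≤ M) {v : α → ℝ} (hv : AEStronglyMeasurable v μ) :
    MemLp (fun x => F x (v x)) q μ :=
  .of_bound (hFm hv) M (hFb.mono fun _ hx => hx _)

theorem continuous_nemytskii_of_bound [IsFiniteMeasure μ] [Fact (1 ≤ p)] [Fact (1 ≤ q)]
    (hq : q ≠ ∞) {M : ℝ} (hFm : SuperpositionMeasurable F μ) (hFb : ∀ᵐ x ∂μ, ∀ t, |F x t| ≤ M)
    (hFc : ∀ᵐ x ∂μ, Continuous (F x)) :
    Continuous (nemytskii F q μ : Lp ℝ p μ → Lp ℝ q μ) := by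
  have hmem (v : Lp ℝ p μ) : MemLp (fun x => F x (v x)) q μ :=
    memLp_superposition_of_bound hFm hFb (Lp.aestronglyMeasurable v)
  refine continuous_iff_continuousAt.2 fun v => Lp.tendsto_of_forall_ae_tendsto fun vs hvs => ?_
  have hcoe : ∀ᵐ x ∂μ, ∀ k, (nemytskii F q μ (vs k) - nemytskii F q μ v : Lp ℝ q μ) x
      = F x (vs k x) - F x (v x) := by
    refine ae_all_iff.2 fun k => ?_
    filter_upwards [Lp.coeFn_sub (nemytskii F q μ (vs k)) (nemytskii F q μ v),
      coeFn_nemytskii (hmem (vs k)), coeFn_nemytskii (hmem v)] with x hsub hvs hv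
    rw [hsub, Pi.sub_apply, hvs, hv]
  rw [← tendsto_sub_nhds_zero_iff]
  refine Lp.tendsto_zero_of_ae_bound hq (2 * M) (fun k => ?_) ?_
  · filter_upwards [hcoe, hFb] with x hx hb
    rw [hx k, Real.norm_eq_abs]
    linarith [abs_sub (F x (vs k x)) (F x (v x)), hb (vs k x), hb (v x)]
  · filter_upwards [hcoe, hFc, hvs] with x hx hc hvx
    simp_rw [hx]
    simpa using ((hc.tendsto (v x)).comp hvx).sub_const (F x (v x))

variable {r : ℝ≥0∞} [Fact (1 ≤ p)] [Fact (1 ≤ q)] [Fact (1 ≤ r)] [ENNReal.HolderTriple r p q]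

theorem coeFn_holderL_mul_nemytskii {v : Lp ℝ p μ} (hv : MemLp (fun x => F x (v x)) r μ)
    (w : Lp ℝ p μ) :
    (ContinuousLinearMap.mul ℝ ℝ).holderL μ r p q (nemytskii F r μ v) w
      =ᵐ[μ] fun x => F x (v x) * w x := by
  filter_upwards [(ContinuousLinearMap.mul ℝ ℝ).coeFn_holder (r := q) (nemytskii F r μ v) w,
    coeFn_nemytskii hv] with x hx hFx
  rw [ContinuousLinearMap.holderL_apply_apply, hx, ContinuousLinearMap.mul_apply', hFx]

theorem nemytskii_sub_sub_holderL_ae_eq {F' : α → ℝ → ℝ} {v w : Lp ℝ p μ}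
    (hv : MemLp (fun x => F x (v x)) q μ) (hw : MemLp (fun x => F x (w x)) q μ)
    (hv' : MemLp (fun x => F' x (v x)) r μ) :
    (nemytskii F q μ w - nemytskii F q μ v
      - (ContinuousLinearMap.mul ℝ ℝ).holderL μ r p q (nemytskii F' r μ v) (w - v) : Lp ℝ q μ)
      =ᵐ[μ] fun x => (F x (w x) - F x (v x) - F' x (v x) * (w x - v x)) / (w x - v x)
        * (w - v : Lp ℝ p μ) x := by
  filter_upwards [Lp.coeFn_sub (nemytskii F q μ w - nemytskii F q μ v) _,
    Lp.coeFn_sub (nemytskii F q μ w) (nemytskii F q μ v), coeFn_nemytskii hw, coeFn_nemytskii hv,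
    coeFn_holderL_mul_nemytskii (q := q) hv' (w - v), Lp.coeFn_sub w v] with x h1 h2 h3 h4 h5 h6
  rw [h1, Pi.sub_apply, h2, Pi.sub_apply, h3, h4, h5, h6, Pi.sub_apply]
  -- where `w x = v x` the numerator vanishes too, so the junk value `0 / 0 = 0` is harmless
  exact (div_mul_cancel_of_imp fun h => by simp [sub_eq_zero.1 h]).symm

theorem hasFDerivAt_nemytskii [IsFiniteMeasure μ] (hr : r ≠ ∞) {F' : α → ℝ → ℝ} {M : ℝ}
    (hFm : SuperpositionMeasurable F μ) (hF'm : SuperpositionMeasurable F' μ)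
    (hF0 : MemLp (fun x => F x 0) q μ) (hderiv : ∀ᵐ x ∂μ, ∀ t, HasDerivAt (F x) (F' x t) t)
    (hF'b : ∀ᵐ x ∂μ, ∀ t, |F' x t| ≤ M) (v : Lp ℝ p μ) :
    HasFDerivAt (nemytskii F q μ)
      ((ContinuousLinearMap.mul ℝ ℝ).holderL μ r p q (nemytskii F' r μ v)) v := by
  have hmem (w : Lp ℝ p μ) : MemLp (fun x => F x (w x)) q μ :=
    memLp_superposition_of_hasDerivAt hFm hF0 hderiv hF'b
      ((Lp.memLp w).mono_exponent (ENNReal.HolderTriple.le p r q))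
  have hmem' := memLp_superposition_of_bound (q := r) hF'm hF'b (Lp.aestronglyMeasurable v)
  rw [hasFDerivAt_iff_tendsto]
  refine Lp.tendsto_of_forall_ae_tendsto fun vs hvs => ?_
  set ρ : ℕ → α → ℝ := fun k x =>
    (F x (vs k x) - F x (v x) - F' x (v x) * (vs k x - v x)) / (vs k x - v x)
  have hρb (k : ℕ) : ∀ᵐ x ∂μ, ‖ρ k x‖ ≤ 2 * M := by
    filter_upwards [hderiv, hF'b] with x hd hb
    exact abs_sub_sub_mul_div_le_of_hasDerivAt hd hb _ _
  have hρm (k : ℕ) : AEStronglyMeasurable (ρ k) μ := by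
    have hvk := Lp.aestronglyMeasurable (vs k)
    have hv := Lp.aestronglyMeasurable v
    exact ((((hFm hvk).sub (hFm hv)).sub ((hF'm hv).mul (hvk.sub hv))).aemeasurable.div
      (hvk.sub hv).aemeasurable).aestronglyMeasurable
  set ρL : ℕ → Lp ℝ r μ := fun k => (MemLp.of_bound (hρm k) _ (hρb k)).toLp
  have hρL : ∀ᵐ x ∂μ, ∀ k, ρL k x = ρ k x :=
    ae_all_iff.2 fun k => (MemLp.of_bound (hρm k) _ (hρb k)).coeFn_toLp
  have hρL0 : Tendsto ρL atTop (𝓝 0) := by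
    refine Lp.tendsto_zero_of_ae_bound hr (2 * M) (fun k => ?_) ?_
    · filter_upwards [hρL, hρb k] with x hx hb
      rwa [hx k]
    · filter_upwards [hρL, hderiv, hvs] with x hx hd hvx
      simp_rw [hx]
      exact (hd (v x)).tendsto_sub_sub_mul_div hvx
  refine squeeze_zero (fun k => by positivity) (fun k => ?_) (by simpa using hρL0.norm)
  have hrem : (nemytskii F q μ (vs k) - nemytskii F q μ v
      - (ContinuousLinearMap.mul ℝ ℝ).holderL μ r p q (nemytskii F' r μ v) (vs k - v) : Lp ℝ q μ)
      =ᵐ[μ] fun x => ρL k x * (vs k - v : Lp ℝ p μ) x := by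
    filter_upwards [nemytskii_sub_sub_holderL_ae_eq (hmem v) (hmem (vs k)) hmem', hρL]
      with x hx hρx
    rw [hx, hρx k]
  calc ‖vs k - v‖⁻¹ * ‖_‖ ≤ ‖vs k - v‖⁻¹ * (‖ρL k‖ * ‖vs k - v‖) := by
        gcongr
        exact Lp.norm_le_mul_of_ae_eq_mul hrem
    _ = ‖ρL k‖ * (‖vs k - v‖⁻¹ * ‖vs k - v‖) := by ring
    _ ≤ ‖ρL k‖ :=
        mul_le_of_le_one_right (norm_nonneg _) (inv_mul_le_one_of_le₀ le_rfl (norm_nonneg _))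

theorem contDiff_nemytskii [IsFiniteMeasure μ] (hr : r ≠ ∞) {F' : α → ℝ → ℝ} {M : ℝ}
    (hFm : SuperpositionMeasurable F μ) (hF'm : SuperpositionMeasurable F' μ)
    (hF0 : MemLp (fun x => F x 0) q μ) (hderiv : ∀ᵐ x ∂μ, ∀ t, HasDerivAt (F x) (F' x t) t)
    (hF'b : ∀ᵐ x ∂μ, ∀ t, |F' x t| ≤ M) (hF'c : ∀ᵐ x ∂μ, Continuous (F' x)) :
    ContDiff ℝ 1 (nemytskii F q μ : Lp ℝ p μ → Lp ℝ q μ) :=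
  contDiff_one_iff_hasFDerivAt.2 ⟨_,
    ((ContinuousLinearMap.mul ℝ ℝ).holderL μ r p q).continuous.comp
      (continuous_nemytskii_of_bound hr hF'm hF'b hF'c),
    hasFDerivAt_nemytskii hr hFm hF'm hF0 hderiv hF'b⟩

end Nemytskii

noncomputable def LinearMap.corestrictLp {X E : Type*} [NormedAddCommGroup X] [NormedSpace ℝ X]
    [NormedAddCommGroup E] [NormedSpace ℝ E] {q : ℝ≥0∞} [Fact (1 ≤ q)] (ι : X →ₗ[ℝ] Lp E q μ)
    (p : ℝ≥0∞) [Fact (1 ≤ p)] (C : ℝ)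
    (h : ∀ u, MemLp (ι u) p μ ∧ eLpNorm (ι u) p μ ≤ ENNReal.ofReal (C * ‖u‖)) :
    X →L[ℝ] Lp E p μ :=
  LinearMap.mkContinuous
    { toFun := fun u => (h u).1.toLp
      map_add' := fun u w => by
        rw [← MemLp.toLp_add]
        exact MemLp.toLp_congr _ _ (by rw [map_add]; exact Lp.coeFn_add _ _)
      map_smul' := fun c u => by
        rw [← MemLp.toLp_const_smul]
        exact MemLp.toLp_congr _ _ (by rw [map_smul]; exact Lp.coeFn_smul _ _) }
    |C| fun u => by
      rw [LinearMap.coe_mk, AddHom.coe_mk, Lp.norm_toLp]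
      calc (eLpNorm (ι u) p μ).toReal ≤ (ENNReal.ofReal (C * ‖u‖)).toReal :=
            ENNReal.toReal_mono ENNReal.ofReal_ne_top (h u).2
        _ = max (C * ‖u‖) 0 := ENNReal.toReal_ofReal'
        _ ≤ |C| * ‖u‖ := max_le (by gcongr; exact le_abs_self C) (by positivity)

theorem LinearMap.coeFn_corestrictLp {X E : Type*} [NormedAddCommGroup X] [NormedSpace ℝ X]
    [NormedAddCommGroup E] [NormedSpace ℝ E] {q : ℝ≥0∞} [Fact (1 ≤ q)] (ι : X →ₗ[ℝ] Lp E q μ)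
    (p : ℝ≥0∞) [Fact (1 ≤ p)] (C : ℝ)
    (h : ∀ u, MemLp (ι u) p μ ∧ eLpNorm (ι u) p μ ≤ ENNReal.ofReal (C * ‖u‖)) (u : X) :
    ι.corestrictLp p C h u =ᵐ[μ] ι u :=
  (h u).1.coeFn_toLp

end MeasureTheory

/-- `X` stands for `H¹(Ω)`, `ι` for its embedding into `L²(Ω)`, and `hSob` for the Sobolev
embedding `H¹(Ω) ⊂ L^s(Ω)`. -/
theorem nemytskii_contDiff_general {n : ℕ}
    (Ω : Set (EuclideanSpace ℝ (Fin n)))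
    (hΩo : IsOpen Ω) (hΩb : Bornology.IsBounded Ω)
    (μ : Measure (EuclideanSpace ℝ (Fin n))) (hμ : μ = volume.restrict Ω)
    (f f' : EuclideanSpace ℝ (Fin n) → ℝ → ℝ)
    (hf : ContDiffOn ℝ 1 (fun p : EuclideanSpace ℝ (Fin n) × ℝ => f p.1 p.2)
      (Ω ×ˢ Set.univ))
    (hf'deriv : ∀ x ∈ Ω, ∀ t : ℝ, HasDerivAt (f x) (f' x t) t)
    (M : ℝ) (hM : ∀ x ∈ Ω, ∀ t : ℝ, |f' x t| ≤ M)
    (hf0 : MemLp (fun x => f x 0) 2 μ)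
    {X : Type*} [NormedAddCommGroup X] [NormedSpace ℝ X]
    (ι : X →L[ℝ] Lp ℝ 2 μ)
    (s : ℝ≥0∞) (hs : 2 < s) (Cs : ℝ)
    (hSob : ∀ u : X, MemLp (ι u) s μ ∧
      eLpNorm (ι u) s μ ≤ ENNReal.ofReal (Cs * ‖u‖))
    (N : X → Lp ℝ 2 μ)
    (hN : ∀ u : X,
      N u = if h : MemLp (fun x => f x (ι u x)) 2 μ then h.toLp _ else 0) :
    ContDiff ℝ 1 N ∧
    ∀ u z : X, (fderiv ℝ N u z : EuclideanSpace ℝ (Fin n) → ℝ)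
      =ᵐ[μ] fun x => f' x (ι u x) * ι z x := by
  have hΩm : MeasurableSet Ω := hΩo.measurableSet
  have : IsFiniteMeasure μ := hμ ▸ isFiniteMeasure_restrict.2 hΩb.measure_lt_top.ne
  have hΩae : ∀ᵐ x ∂μ, x ∈ Ω := hμ ▸ ae_restrict_mem hΩm
  obtain ⟨r, hr, _⟩ := ENNReal.exists_holderTriple_of_lt hs
  have : Fact (1 ≤ r) := ⟨one_le_two.trans (ENNReal.HolderTriple.le r s 2)⟩
  have : Fact (1 ≤ s) := ⟨one_le_two.trans hs.le⟩
  have hfm := hf.continuousOn.superpositionMeasurable hΩm hΩae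
  have hf'cont := hf.continuousOn_partialDeriv_snd hΩo hf'deriv
  have hf'm := hf'cont.superpositionMeasurable hΩm hΩae
  have hderiv : ∀ᵐ x ∂μ, ∀ t, HasDerivAt (f x) (f' x t) t := hΩae.mono hf'deriv
  have hf'b : ∀ᵐ x ∂μ, ∀ t, |f' x t| ≤ M := hΩae.mono hM
  have hf'c : ∀ᵐ x ∂μ, Continuous (f' x) :=
    hΩae.mono fun x hx => hf'cont.comp_continuous (.prodMk_right x) fun _ => ⟨hx, trivial⟩
  set J := (ι : X →ₗ[ℝ] Lp ℝ 2 μ).corestrictLp s Cs hSob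
  have hJ := (ι : X →ₗ[ℝ] Lp ℝ 2 μ).coeFn_corestrictLp s Cs hSob
  obtain rfl : N = nemytskii f 2 μ ∘ J :=
    funext fun u => (hN u).trans (nemytskii_congr_ae (hJ u).symm)
  refine ⟨(contDiff_nemytskii hr hfm hf'm hf0 hderiv hf'b hf'c).comp J.contDiff, fun u z => ?_⟩
  rw [((hasFDerivAt_nemytskii hr hfm hf'm hf0 hderiv hf'b (J u)).comp u J.hasFDerivAt).fderiv]
  filter_upwards [coeFn_holderL_mul_nemytskii (q := 2) (r := r)
    (memLp_superposition_of_bound hf'm hf'b (Lp.aestronglyMeasurable (J u))) (J z),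
    hJ u, hJ z] with x hx hu hz
  rw [ContinuousLinearMap.comp_apply, hx, hu, hz]
  rfl

/-- for an appropriate `f` (C¹ on `Ω × ℝ`, `f(·,0) ∈ L²`, `∂₂f`
bounded), the Nemytskii operator `N_f : H¹(Ω) → L²(Ω)` is continuously
Fréchet differentiable with `DN_f(u) z = ∂₂f(·, u(·)) z(·)`. The Sobolev space
`H¹(Ω)` is abstracted as a Banach space `X` with a continuous embedding
`ι : X → L²(Ω)` satisfying the Sobolev bound `‖ι u‖_{L^s} ≤ Cs ‖u‖` for some
`s > 2` (the only properties of `H¹(Ω)` used). -/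
theorem nemytskii_contDiff {n : ℕ}
    (Ω : Set (EuclideanSpace ℝ (Fin n)))
    (hΩo : IsOpen Ω) (hΩb : Bornology.IsBounded Ω) (hΩc : IsConnected Ω)
    (μ : Measure (EuclideanSpace ℝ (Fin n))) (hμ : μ = volume.restrict Ω)
    (f f' : EuclideanSpace ℝ (Fin n) → ℝ → ℝ)
    (hf : ContDiffOn ℝ 1 (fun p : EuclideanSpace ℝ (Fin n) × ℝ => f p.1 p.2)
      (Ω ×ˢ Set.univ))
    (hf'deriv : ∀ x ∈ Ω, ∀ t : ℝ, HasDerivAt (f x) (f' x t) t)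
    (M : ℝ) (hM : ∀ x ∈ Ω, ∀ t : ℝ, |f' x t| ≤ M)
    (hf0 : MemLp (fun x => f x 0) 2 μ)
    {X : Type*} [NormedAddCommGroup X] [NormedSpace ℝ X] [CompleteSpace X]
    (ι : X →L[ℝ] Lp ℝ 2 μ) (hι : Function.Injective ι)
    (s : ℝ≥0∞) (hs : 2 < s) (Cs : ℝ)
    (hSob : ∀ u : X, MemLp (ι u) s μ ∧
      eLpNorm (ι u) s μ ≤ ENNReal.ofReal (Cs * ‖u‖))
    (N : X → Lp ℝ 2 μ)
    (hN : ∀ u : X,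
      N u = if h : MemLp (fun x => f x (ι u x)) 2 μ then h.toLp _ else 0) :
    ContDiff ℝ 1 N ∧
    ∀ u z : X, (fderiv ℝ N u z : EuclideanSpace ℝ (Fin n) → ℝ)
      =ᵐ[μ] fun x => f' x (ι u x) * ι z x :=
  nemytskii_contDiff_general Ω hΩo hΩb μ hμ f f' hf hf'deriv M hM hf0 ι s hs Cs hSob N hN
end

section
/- Let f be appropriate and I = [a,b] ⊇ closure(∂₂f(Ω × ℝ)), and let X = W_X ⊕ V_X, Y = W_Y ⊕ V_Y be the I-decompositions with V_X = V_Y = span{φ_k : λ_k ∈ [a,b]}. Then there exists C > 0, independent of v, w, such that for all v ∈ V_X, w ∈ W_X, h ∈ W_X: ‖DF_v(w)h‖_{H⁻¹} ≥ C‖h‖_{H¹}, where DF_v(w)h = P_Y(−Δh − ∂₂f(·,w+v)h). -/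
set_option synthInstance.maxHeartbeats 400000

open MeasureTheory
open scoped ENNReal Classical RealInnerProductSpace

/-!
Expand `h ∈ W` in the Dirichlet eigenbasis as `h = h₊ + h₋`, where `h₊` keeps the modes with
`λ_k > b` and `h₋` those with `λ_k < a` (the modes in `[a, b]` vanish because `h ⊥ V`), and test
against `q = h₊ - h₋ ∈ W`, which has `‖q‖ = ‖h‖`. Since `‖ι u‖² = ∑ λ_k⁻¹ ⟪φ_k, u⟫²` and
`a ≤ ∂₂f ≤ b`,
`⟪h - S(∂₂f · h), q⟫ ≥ ∑_{λ_k > b} (1 - b/λ_k) ⟪φ_k, h⟫² + ∑_{λ_k < a} (a/λ_k - 1) ⟪φ_k, h⟫²`,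
and both gap factors are bounded below uniformly in `k` because `λ_k → ∞`. As `q ∈ W`, the
projection onto `W` does not change this inner product, and Cauchy–Schwarz concludes.
-/

open Filter Topology Set

namespace HilbertBasis

variable {ι 𝕜 E : Type*}

section RCLike

variable [RCLike 𝕜] [NormedAddCommGroup E] [InnerProductSpace 𝕜 E]

noncomputable def restrictCoeffs (e : HilbertBasis ι 𝕜 E) (s : Set ι) (u : E) : E :=
  e.repr.symm ⟨s.indicator (e.repr u),
    (lp.memℓp (e.repr u)).mono' fun _ => norm_indicator_le_norm_self _ _⟩

@[simp]
theorem repr_restrictCoeffs (e : HilbertBasis ι 𝕜 E) (s : Set ι) (u : E) (i : ι) :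
    e.repr (e.restrictCoeffs s u) i = s.indicator (e.repr u) i := by
  simp [restrictCoeffs]

theorem restrictCoeffs_add_restrictCoeffs (e : HilbertBasis ι 𝕜 E) {s t : Set ι}
    (hst : Disjoint s t) {u : E} (hu : ∀ i ∉ s ∪ t, e.repr u i = 0) :
    e.restrictCoeffs s u + e.restrictCoeffs t u = u := by
  refine e.repr.injective (lp.ext (funext fun i => ?_))
  rw [map_add, lp.coeFn_add, Pi.add_apply, repr_restrictCoeffs, repr_restrictCoeffs,
    ← congrFun (indicator_union_of_disjoint hst _) i]
  by_cases hi : i ∈ s ∪ t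
  · exact indicator_of_mem hi _
  · rw [indicator_of_notMem hi, hu i hi]

theorem inner_restrictCoeffs_of_disjoint (e : HilbertBasis ι 𝕜 E) {s t : Set ι}
    (hst : Disjoint s t) (u v : E) :
    inner 𝕜 (e.restrictCoeffs s u) (e.restrictCoeffs t v) = 0 := by
  rw [← e.repr.inner_map_map, lp.inner_eq_tsum]
  refine (tsum_congr fun i => ?_).trans tsum_zero
  simp only [repr_restrictCoeffs]
  by_cases hi : i ∈ s
  · rw [indicator_of_notMem (hst.notMem_of_mem_left hi), inner_zero_right]
  · rw [indicator_of_notMem hi, inner_zero_left]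

theorem mem_orthogonal_span_image_iff (e : HilbertBasis ι 𝕜 E) (A : Set ι) (u : E) :
    u ∈ (Submodule.span 𝕜 (e '' A))ᗮ ↔ ∀ i ∈ A, e.repr u i = 0 := by
  simp_rw [Submodule.mem_orthogonal, e.repr_apply_apply]
  refine ⟨fun h i hi => h _ (Submodule.subset_span (mem_image_of_mem e hi)), fun h x hx => ?_⟩
  induction hx using Submodule.span_induction with
  | mem x hx => obtain ⟨i, hi, rfl⟩ := hx; exact h i hi
  | zero => exact inner_zero_left _
  | add x y _ _ hx hy => rw [inner_add_left, hx, hy, add_zero]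
  | smul c x _ hx => rw [inner_smul_left, hx, mul_zero]

end RCLike

section Real

variable {G : Type*} [NormedAddCommGroup E] [InnerProductSpace ℝ E]
  [NormedAddCommGroup G] [InnerProductSpace ℝ G]

theorem hasSum_inner_apply_self (e : HilbertBasis ι ℝ E) {T : E →L[ℝ] E}
    (hT : (T : E →ₗ[ℝ] E).IsSymmetric) {μ : ι → ℝ} (hμ : ∀ i, T (e i) = μ i • e i) (u : E) :
    HasSum (fun i => μ i * e.repr u i ^ 2) ⟪T u, u⟫ := by
  refine (e.hasSum_inner_mul_inner (T u) u).congr_fun fun i => ?_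
  rw [e.repr_apply_apply, show ⟪T u, e i⟫ = ⟪u, T (e i)⟫ from hT u (e i), hμ,
    real_inner_smul_right, real_inner_comm u]
  ring

theorem mul_norm_sq_le_add_mul_inner_apply_self (e : HilbertBasis ι ℝ E) {T : E →L[ℝ] E}
    (hT : (T : E →ₗ[ℝ] E).IsSymmetric) {μ : ι → ℝ} (hμ : ∀ i, T (e i) = μ i • e i) {u : E}
    {p c δ : ℝ} (h : ∀ i, e.repr u i ≠ 0 → δ ≤ p + c * μ i) :
    δ * ‖u‖ ^ 2 ≤ p * ‖u‖ ^ 2 + c * ⟪T u, u⟫ := by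
  have hparseval : HasSum (fun i => e.repr u i ^ 2) (‖u‖ ^ 2) := by
    rw [← real_inner_self_eq_norm_sq]
    refine (e.hasSum_inner_mul_inner u u).congr_fun fun i => ?_
    rw [e.repr_apply_apply, real_inner_comm, sq]
  refine hasSum_le (fun i => ?_) (hparseval.mul_left δ)
    ((hparseval.mul_left p).add ((e.hasSum_inner_apply_self hT hμ u).mul_left c))
  by_cases hi : e.repr u i = 0
  · simp [hi]
  · nlinarith [h i hi, sq_nonneg (e.repr u i)]

theorem mul_norm_sq_le_add_mul_norm_sq_apply (e : HilbertBasis ι ℝ E) (L : E →L[ℝ] G)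
    (S : G →L[ℝ] E) (hS : ∀ g z, ⟪S g, z⟫ = ⟪g, L z⟫) {lam : ι → ℝ} (hpos : ∀ i, 0 < lam i)
    (heigen : ∀ i, lam i • S (L (e i)) = e i) {u : E} {p c δ : ℝ}
    (h : ∀ i, e.repr u i ≠ 0 → δ ≤ p + c * (lam i)⁻¹) :
    δ * ‖u‖ ^ 2 ≤ p * ‖u‖ ^ 2 + c * ‖L u‖ ^ 2 := by
  have hT : ((S ∘L L : E →L[ℝ] E) : E →ₗ[ℝ] E).IsSymmetric := fun z z' => by
    change ⟪S (L z), z'⟫ = ⟪z, S (L z')⟫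
    rw [hS, real_inner_comm (S (L z')), hS, real_inner_comm]
  have hTe (i : ι) : (S ∘L L) (e i) = (lam i)⁻¹ • e i :=
    (eq_inv_smul_iff₀ (hpos i).ne').2 (heigen i)
  rw [← real_inner_self_eq_norm_sq (L u), ← hS]
  exact e.mul_norm_sq_le_add_mul_inner_apply_self hT hTe h

end Real

end HilbertBasis

theorem MeasureTheory.L2.inner_sub_le_of_ae_eq_mul_add {α : Type*} [MeasurableSpace α]
    {μ : Measure α} {F g₁ g₂ : Lp ℝ 2 μ} {θ : α → ℝ} {a b : ℝ}
    (hθ : ∀ᵐ x ∂μ, θ x ∈ Icc a b) (hF : F =ᵐ[μ] fun x => θ x * (g₁ + g₂) x) :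
    ⟪F, g₁ - g₂⟫ ≤ b * ‖g₁‖ ^ 2 - a * ‖g₂‖ ^ 2 := by
  have hinner (g h : Lp ℝ 2 μ) : ⟪g, h⟫ = ∫ x, g x * h x ∂μ := by
    simp [L2.inner_def, mul_comm]
  have hint (g h : Lp ℝ 2 μ) : Integrable (fun x => g x * h x) μ := by
    simpa [mul_comm] using L2.integrable_inner (𝕜 := ℝ) g h
  rw [← real_inner_self_eq_norm_sq, ← real_inner_self_eq_norm_sq, hinner, hinner, hinner,
    ← integral_const_mul, ← integral_const_mul,
    ← integral_sub ((hint _ _).const_mul _) ((hint _ _).const_mul _)]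
  refine integral_mono_ae (hint _ _) (((hint _ _).const_mul _).sub ((hint _ _).const_mul _)) ?_
  filter_upwards [hθ, hF, Lp.coeFn_add g₁ g₂, Lp.coeFn_sub g₁ g₂] with x ⟨ha, hb⟩ hFx hadd hsub
  rw [hFx, hadd, hsub, Pi.add_apply, Pi.sub_apply]
  nlinarith [mul_le_mul_of_nonneg_right hb (mul_self_nonneg (g₁ x)),
    mul_le_mul_of_nonneg_right ha (mul_self_nonneg (g₂ x))]

theorem exists_pos_forall_le_of_eventually {u : ℕ → ℝ} {P : ℕ → Prop} {c : ℝ} (hc : 0 < c)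
    (hpos : ∀ j, P j → 0 < u j) (hev : ∀ᶠ j in atTop, P j → c ≤ u j) :
    ∃ δ, 0 < δ ∧ ∀ j, P j → δ ≤ u j := by
  obtain ⟨N, hN⟩ := eventually_atTop.1 hev
  let g j := if P j then u j else c
  have hg : ∀ j, 0 < g j := fun j => by
    by_cases hj : P j
    · simp [g, hj, hpos j hj]
    · simp [g, hj, hc]
  refine ⟨min c ((Finset.range (N + 1)).inf' (by simp) g),
    lt_min hc ((Finset.lt_inf'_iff _).2 fun j _ => hg j), fun j hj => ?_⟩
  rcases lt_or_ge j N with hjN | hjN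
  · have hjmem : j ∈ Finset.range (N + 1) := Finset.mem_range.2 (by omega)
    refine (min_le_right _ _).trans ((Finset.inf'_le g hjmem).trans_eq ?_)
    simp only [g, if_pos hj]
  · exact (min_le_left _ _).trans (hN j hjN hj)

theorem Submodule.mul_norm_le_norm_starProjection {E : Type*} [NormedAddCommGroup E]
    [InnerProductSpace ℝ E] (K : Submodule ℝ E) [K.HasOrthogonalProjection] {x q : E}
    (hq : q ∈ K) {c : ℝ} (h : c * ‖q‖ ^ 2 ≤ ⟪x, q⟫) : c * ‖q‖ ≤ ‖K.starProjection x‖ := by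
  have hproj : ⟪x, q⟫ = ⟪K.starProjection x, q⟫ := by
    rw [← sub_eq_zero, ← inner_sub_left]; exact K.starProjection_inner_eq_zero x q hq
  rcases (norm_nonneg q).eq_or_lt with hq0 | hq0
  · rw [← hq0, mul_zero]; exact norm_nonneg _
  · refine le_of_mul_le_mul_right ?_ hq0
    calc c * ‖q‖ * ‖q‖ = c * ‖q‖ ^ 2 := by ring
      _ ≤ ‖K.starProjection x‖ * ‖q‖ := h.trans (hproj ▸ real_inner_le_norm _ _)

theorem exists_spectral_gap {lam : ℕ → ℝ} (hpos : ∀ k, 0 < lam k)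
    (htop : Tendsto lam atTop atTop) (a b : ℝ) :
    ∃ δ, 0 < δ ∧ ∀ k, (b < lam k → δ ≤ 1 - b * (lam k)⁻¹) ∧
      (lam k < a → δ ≤ a * (lam k)⁻¹ - 1) := by
  have hlim : Tendsto (fun k => 1 - b * (lam k)⁻¹) atTop (𝓝 1) := by
    simpa using tendsto_const_nhds.sub (htop.inv_tendsto_atTop.const_mul b)
  obtain ⟨δ₁, hδ₁, hgap₁⟩ := exists_pos_forall_le_of_eventually
    (u := fun k => 1 - b * (lam k)⁻¹) (P := fun k => b < lam k) one_half_pos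
    (fun k hk => sub_pos.2 ((mul_inv_lt_iff₀ (hpos k)).2 (by simpa using hk)))
    ((hlim.eventually (lt_mem_nhds one_half_lt_one)).mono fun _ hk _ => hk.le)
  obtain ⟨δ₂, hδ₂, hgap₂⟩ := exists_pos_forall_le_of_eventually
    (u := fun k => a * (lam k)⁻¹ - 1) (P := fun k => lam k < a) one_pos
    (fun k hk => sub_pos.2 ((lt_mul_inv_iff₀ (hpos k)).2 (by simpa using hk)))
    ((htop.eventually_ge_atTop a).mono fun _ hk hk' => absurd hk' hk.not_gt)
  exact ⟨min δ₁ δ₂, lt_min hδ₁ hδ₂, fun k => ⟨fun hk => (min_le_left _ _).trans (hgap₁ k hk),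
    fun hk => (min_le_right _ _).trans (hgap₂ k hk)⟩⟩

theorem exists_inner_sub_ge_mul_norm_sq {α X : Type*} [MeasurableSpace α] {μ : Measure α}
    [NormedAddCommGroup X] [InnerProductSpace ℝ X]
    (e : HilbertBasis ℕ ℝ X) (ι : X →L[ℝ] Lp ℝ 2 μ) (S : Lp ℝ 2 μ →L[ℝ] X)
    (hS : ∀ g z, ⟪S g, z⟫ = ⟪g, ι z⟫) {lam : ℕ → ℝ} (hpos : ∀ k, 0 < lam k)
    (heigen : ∀ k, lam k • S (ι (e k)) = e k) {a b δ : ℝ} (hab : a ≤ b)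
    (hgap : ∀ k, (b < lam k → δ ≤ 1 - b * (lam k)⁻¹) ∧ (lam k < a → δ ≤ a * (lam k)⁻¹ - 1))
    {h : X} (hh : ∀ k, lam k ∈ Icc a b → e.repr h k = 0) {F : Lp ℝ 2 μ} {θ : α → ℝ}
    (hθ : ∀ᵐ x ∂μ, θ x ∈ Icc a b) (hF : F =ᵐ[μ] fun x => θ x * ι h x) :
    ∃ q, (∀ k, lam k ∈ Icc a b → e.repr q k = 0) ∧ ‖q‖ = ‖h‖ ∧
      δ * ‖q‖ ^ 2 ≤ ⟪h - S F, q⟫ := by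
  set s := {k | b < lam k}
  set t := {k | lam k < a}
  have hst : Disjoint s t :=
    disjoint_left.2 fun k hs ht => (hab.trans_lt (lt_trans hs ht)).false
  set hp := e.restrictCoeffs s h
  set hm := e.restrictCoeffs t h
  have hsplit : hp + hm = h := e.restrictCoeffs_add_restrictCoeffs hst fun k hk =>
    hh k ⟨not_lt.1 fun hk' => hk (Or.inr hk'), not_lt.1 fun hk' => hk (Or.inl hk')⟩
  have horth : ⟪hp, hm⟫ = 0 := e.inner_restrictCoeffs_of_disjoint hst h h
  have horth' : ⟪hm, hp⟫ = 0 := e.inner_restrictCoeffs_of_disjoint hst.symm h h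
  have hp_gap : δ * ‖hp‖ ^ 2 ≤ 1 * ‖hp‖ ^ 2 + -b * ‖ι hp‖ ^ 2 :=
    e.mul_norm_sq_le_add_mul_norm_sq_apply ι S hS hpos heigen fun k hk => by
      have : k ∈ s := mem_of_indicator_ne_zero (by simpa [hp] using hk)
      linarith [(hgap k).1 this]
  have hm_gap : δ * ‖hm‖ ^ 2 ≤ -1 * ‖hm‖ ^ 2 + a * ‖ι hm‖ ^ 2 :=
    e.mul_norm_sq_le_add_mul_norm_sq_apply ι S hS hpos heigen fun k hk => by
      have : k ∈ t := mem_of_indicator_ne_zero (by simpa [hm] using hk)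
      linarith [(hgap k).2 this]
  have hL2 : ⟪F, ι hp - ι hm⟫ ≤ b * ‖ι hp‖ ^ 2 - a * ‖ι hm‖ ^ 2 :=
    L2.inner_sub_le_of_ae_eq_mul_add hθ (by rwa [← map_add, hsplit])
  refine ⟨hp - hm, fun k hk => ?_, ?_, ?_⟩
  · simp [hp, hm, indicator_of_notMem (fun hks : k ∈ s => hk.2.not_gt hks),
      indicator_of_notMem (fun hkt : k ∈ t => hk.1.not_gt hkt)]
  · rw [← hsplit, norm_sub_eq_norm_add horth']
  · have hinner : ⟪h - S F, hp - hm⟫ = ‖hp‖ ^ 2 - ‖hm‖ ^ 2 - ⟪F, ι hp - ι hm⟫ := by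
      rw [inner_sub_left, hS, map_sub, ← hsplit, inner_add_left, inner_sub_right,
        inner_sub_right, horth, horth', real_inner_self_eq_norm_sq,
        real_inner_self_eq_norm_sq]
      ring
    have hq : ‖hp - hm‖ ^ 2 = ‖hp‖ ^ 2 + ‖hm‖ ^ 2 := by
      simpa only [sq] using norm_sub_sq_eq_norm_sq_add_norm_sq_real horth
    rw [hinner, hq]
    linarith

theorem coercive_bound_general {n : ℕ}
    (Ω : Set (EuclideanSpace ℝ (Fin n)))
    (hΩo : IsOpen Ω)
    (μ : Measure (EuclideanSpace ℝ (Fin n))) (hμ : μ = volume.restrict Ω)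
    (f' : EuclideanSpace ℝ (Fin n) → ℝ → ℝ)
    {X : Type*} [NormedAddCommGroup X] [InnerProductSpace ℝ X] [CompleteSpace X]
    (ι : X →L[ℝ] Lp ℝ 2 μ)
    (S : Lp ℝ 2 μ →L[ℝ] X)
    (hS : ∀ (g : Lp ℝ 2 μ) (z : X), ⟪S g, z⟫ = inner ℝ g (ι z))
    (φ : ℕ → X) (hortho : Orthonormal ℝ φ)
    (hcomplete : (Submodule.span ℝ (Set.range φ)).topologicalClosure = ⊤)
    (lam : ℕ → ℝ) (hpos : ∀ k, 0 < lam k)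
    (htop : Filter.Tendsto lam Filter.atTop Filter.atTop)
    (heigen : ∀ k, lam k • S (ι (φ k)) = φ k)
    (a b : ℝ) (hab : a ≤ b)
    (hrange : ∀ x ∈ Ω, ∀ t : ℝ, f' x t ∈ Set.Icc a b)
    (V W : Submodule ℝ X)
    (hV : V = Submodule.span ℝ (φ '' {k | lam k ∈ Set.Icc a b}))
    (hW : W = Vᗮ) [W.HasOrthogonalProjection]
    (mul : X → X → Lp ℝ 2 μ)
    (hmul : ∀ u h : X, mul u h =
      if hm : MemLp (fun x => f' x (ι u x) * ι h x) 2 μ then hm.toLp _ else 0) :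
    ∃ C : ℝ, 0 < C ∧ ∀ v ∈ V, ∀ w ∈ W, ∀ h ∈ W,
      C * ‖h‖ ≤ ‖(W.orthogonalProjectionOnto (h - S (mul (w + v) h)) : X)‖ := by
  obtain ⟨e, rfl⟩ : ∃ e : HilbertBasis ℕ ℝ X, ⇑e = φ :=
    ⟨HilbertBasis.mk hortho hcomplete.ge, HilbertBasis.coe_mk _ _⟩
  obtain ⟨δ, hδ, hgap⟩ := exists_spectral_gap hpos htop a b
  have hWiff (u : X) : u ∈ W ↔ ∀ k, lam k ∈ Icc a b → e.repr u k = 0 := by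
    rw [hW, hV, e.mem_orthogonal_span_image_iff]; rfl
  refine ⟨min δ 1, lt_min hδ one_pos, fun v _ w _ h hh => ?_⟩
  rw [Submodule.coe_orthogonalProjectionOnto_apply, hmul]
  split_ifs with hm
  · have hθ : ∀ᵐ x ∂μ, f' x (ι (w + v) x) ∈ Icc a b := by
      subst hμ
      filter_upwards [ae_restrict_mem hΩo.measurableSet] with x hx using hrange x hx _
    obtain ⟨q, hqW, hqh, hq⟩ := exists_inner_sub_ge_mul_norm_sq e ι S hS hpos heigen hab hgap
      ((hWiff h).1 hh) hθ hm.coeFn_toLp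
    calc min δ 1 * ‖h‖ ≤ δ * ‖q‖ :=
          hqh ▸ mul_le_mul_of_nonneg_right (min_le_left _ _) (norm_nonneg _)
      _ ≤ _ := W.mul_norm_le_norm_starProjection ((hWiff q).2 hqW) hq
  · rw [map_zero, sub_zero, W.starProjection_eq_self_iff.2 hh]
    exact mul_le_of_le_one_left (norm_nonneg h) (min_le_right _ _)

/-- uniform coercive bound for the projected restrictions: in
the `I`-decomposition `X = W_X ⊕ V_X`, `Y = W_Y ⊕ V_Y` with
`V_X = V_Y = span{φ_k : λ_k ∈ [a,b]}` and `[a,b] ⊇ closure(∂₂f(Ω×ℝ))`, there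
is `C > 0` independent of `v, w` with `‖DF_v(w) h‖_{H⁻¹} ≥ C ‖h‖_{H¹}` for all
`v ∈ V_X`, `w, h ∈ W_X`. Here `X` is `H¹₀(Ω)` (abstracted as a Hilbert space
with compact-type Sobolev embedding `ι` into `L²(Ω)`), `H⁻¹(Ω)` is identified
with `H¹₀(Ω)` via `⟨−Δu, ·⟩ = ⟨u, ·⟩₁`; under this identification
`S : L² → H⁻¹ ≅ X` is the adjoint of `ι`, the Dirichlet eigenfunctions satisfy
`λ_k S(ι φ_k) = φ_k`, and
`DF_v(w) h = P_Y(−Δh − ∂₂f(·, w+v) h) = P_W(h − S(∂₂f(·, w+v)·h))`. -/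
theorem coercive_bound {n : ℕ}
    (Ω : Set (EuclideanSpace ℝ (Fin n)))
    (hΩo : IsOpen Ω) (hΩb : Bornology.IsBounded Ω) (hΩc : IsConnected Ω)
    (μ : Measure (EuclideanSpace ℝ (Fin n))) (hμ : μ = volume.restrict Ω)
    (f f' : EuclideanSpace ℝ (Fin n) → ℝ → ℝ)
    (hf : ContDiffOn ℝ 1 (fun p : EuclideanSpace ℝ (Fin n) × ℝ => f p.1 p.2)
      (Ω ×ˢ Set.univ))
    (hf'deriv : ∀ x ∈ Ω, ∀ t : ℝ, HasDerivAt (f x) (f' x t) t)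
    (hf0 : MemLp (fun x => f x 0) 2 μ)
    {X : Type*} [NormedAddCommGroup X] [InnerProductSpace ℝ X] [CompleteSpace X]
    (ι : X →L[ℝ] Lp ℝ 2 μ) (hι : Function.Injective ι)
    (s : ℝ≥0∞) (hs : 2 < s) (Cs : ℝ)
    (hSob : ∀ u : X, MemLp (ι u) s μ ∧
      eLpNorm (ι u) s μ ≤ ENNReal.ofReal (Cs * ‖u‖))
    (S : Lp ℝ 2 μ →L[ℝ] X)
    (hS : ∀ (g : Lp ℝ 2 μ) (z : X), ⟪S g, z⟫ = inner ℝ g (ι z))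
    (φ : ℕ → X) (hortho : Orthonormal ℝ φ)
    (hcomplete : (Submodule.span ℝ (Set.range φ)).topologicalClosure = ⊤)
    (lam : ℕ → ℝ) (hpos : ∀ k, 0 < lam k) (hmono : Monotone lam)
    (htop : Filter.Tendsto lam Filter.atTop Filter.atTop)
    (heigen : ∀ k, lam k • S (ι (φ k)) = φ k)
    (a b : ℝ) (hab : a ≤ b)
    (hrange : ∀ x ∈ Ω, ∀ t : ℝ, f' x t ∈ Set.Icc a b)
    (V W : Submodule ℝ X)
    (hV : V = Submodule.span ℝ (φ '' {k | lam k ∈ Set.Icc a b}))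
    (hW : W = Vᗮ) [W.HasOrthogonalProjection]
    (mul : X → X → Lp ℝ 2 μ)
    (hmul : ∀ u h : X, mul u h =
      if hm : MemLp (fun x => f' x (ι u x) * ι h x) 2 μ then hm.toLp _ else 0) :
    ∃ C : ℝ, 0 < C ∧ ∀ v ∈ V, ∀ w ∈ W, ∀ h ∈ W,
      C * ‖h‖ ≤ ‖(W.orthogonalProjectionOnto (h - S (mul (w + v) h)) : X)‖ :=
  coercive_bound_general Ω hΩo μ hμ f' ι S hS φ hortho hcomplete lam hpos htop heigen a b hab hrange
    V W hV hW mul hmul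
end

section
/- Let H be a Hilbert space, (φ_k)_{k≥1} an orthogonal basis of eigenvectors of a positive self-adjoint operator A with eigenvalues 0 < λ₁ ≤ λ₂ ≤ …, let [a,b] be an interval, γ = (a+b)/2, c < min over k with λ_k ∉ [a,b] of |λ_k − γ|, and let W be the closed span of {φ_k : λ_k ∉ [a,b]}. Then for every bounded self-adjoint operator B with ‖B − γI‖ ≤ c, the operator P_W(A − B) restricted to W is bounded below: ‖P_W(A−B)h‖ ≥ (min_{λ_k∉[a,b]} |λ_k−γ| − c)·c'·‖h‖ for all h ∈ W (for an appropriate constant c' > 0 depending only on the spectrum). -/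
/-!
Shift the spectrum by `γ = (a + b) / 2`: with `T = A - γ`, one has `A - B = T - (B - γ)`.
Being self-adjoint and diagonal in the basis, `T` leaves `span {φ k | λ k ∈ [a, b]}` invariant,
hence also its orthogonal complement `W`. On `W` only the coefficients with `λ k ∉ [a, b]` survive,
and `T` multiplies each of them by `|λ k - γ| ≥ m`, so Parseval gives `m ‖h‖ ≤ ‖T h‖`.
Then `P_W (A - B) h = T h - P_W ((B - γ) h)` has norm at least `(m - c) ‖h‖`, i.e. `c' = 1`.
-/

open Module End Submodule
open scoped InnerProductSpace

theorem Submodule.span_image_mem_invtSubmodule {R M ι : Type*} [CommSemiring R] [AddCommMonoid M]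
    [Module R M] {f : End R M} {v : ι → M} {μ : ι → R} (hf : ∀ i, f (v i) = μ i • v i)
    (s : Set ι) : span R (v '' s) ∈ invtSubmodule f := by
  rw [mem_invtSubmodule, span_le]
  rintro _ ⟨i, hi, rfl⟩
  simpa [hf i] using smul_mem _ (μ i) (subset_span (Set.mem_image_of_mem v hi))

section Perturbation

variable {𝕜 E : Type*} [RCLike 𝕜] [NormedAddCommGroup E] [InnerProductSpace 𝕜 E]

theorem sub_mul_norm_le_norm_starProjection_sub_apply {K : Submodule 𝕜 E}
    [K.HasOrthogonalProjection] {T : E →L[𝕜] E} (hK : K ∈ invtSubmodule T.toLinearMap) {m : ℝ}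
    (hT : ∀ h ∈ K, m * ‖h‖ ≤ ‖T h‖) (S : E →L[𝕜] E) {h : E} (hh : h ∈ K) :
    (m - ‖S‖) * ‖h‖ ≤ ‖K.starProjection ((T - S) h)‖ := by
  have hTh : K.starProjection (T h) = T h := starProjection_eq_self_iff.mpr (hK hh)
  calc (m - ‖S‖) * ‖h‖ = m * ‖h‖ - ‖S‖ * ‖h‖ := sub_mul _ _ _
    _ ≤ ‖T h‖ - ‖K.starProjection (S h)‖ :=
      sub_le_sub (hT h hh) ((K.norm_starProjection_apply_le _).trans (S.le_opNorm h))
    _ ≤ ‖T h - K.starProjection (S h)‖ := norm_sub_norm_le _ _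
    _ = ‖K.starProjection ((T - S) h)‖ := by rw [sub_apply, map_sub, hTh]

end Perturbation

namespace HilbertBasis

variable {ι H : Type*} [NormedAddCommGroup H] [InnerProductSpace ℝ H]

theorem hasSum_inner_sq (b : HilbertBasis ι ℝ H) (x : H) :
    HasSum (fun i => ⟪b i, x⟫_ℝ ^ 2) (‖x‖ ^ 2) := by
  simpa [sq, real_inner_comm x] using b.hasSum_inner_mul_inner x x

theorem mul_norm_le_norm_apply_of_mem_orthogonal_span (b : HilbertBasis ι ℝ H)
    {T : H →ₗ[ℝ] H} (hT : T.IsSymmetric) {μ : ι → ℝ} (hTb : ∀ i, T (b i) = μ i • b i)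
    {s : Set ι} {m : ℝ} (hm : ∀ i ∉ s, m ≤ |μ i|) {h : H} (hh : h ∈ (span ℝ (b '' s))ᗮ) :
    m * ‖h‖ ≤ ‖T h‖ := by
  obtain hm0 | hm0 := le_or_gt m 0
  · exact (mul_nonpos_of_nonpos_of_nonneg hm0 (norm_nonneg h)).trans (norm_nonneg _)
  have hcoeff : ∀ i, ⟪b i, T h⟫_ℝ = μ i * ⟪b i, h⟫_ℝ := fun i => by
    rw [← hT, hTb, real_inner_smul_left]
  have hpoint : ∀ i, m ^ 2 * ⟪b i, h⟫_ℝ ^ 2 ≤ ⟪b i, T h⟫_ℝ ^ 2 := fun i => by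
    by_cases hi : i ∈ s
    · have : ⟪b i, h⟫_ℝ = 0 := (mem_orthogonal _ h).mp hh _ (subset_span ⟨i, hi, rfl⟩)
      simp [hcoeff, this]
    · rw [hcoeff, mul_pow, ← sq_abs (μ i)]
      gcongr
      exact hm i hi
  have hsq : (m * ‖h‖) ^ 2 ≤ ‖T h‖ ^ 2 := by
    rw [mul_pow]
    exact hasSum_le hpoint ((b.hasSum_inner_sq h).mul_left _) (b.hasSum_inner_sq (T h))
  exact (pow_le_pow_iff_left₀ (by positivity) (norm_nonneg _) two_ne_zero).mp hsq

end HilbertBasis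

theorem abstract_spectral_gap_coercivity_general {H : Type*}
    [NormedAddCommGroup H] [InnerProductSpace ℝ H] [CompleteSpace H]
    (φ : ℕ → H) (hortho : Orthonormal ℝ φ)
    (hcomplete : (Submodule.span ℝ (Set.range φ)).topologicalClosure = ⊤)
    (lam : ℕ → ℝ)
    (A : H →L[ℝ] H) (hAsa : IsSelfAdjoint A)
    (hA : ∀ k, A (φ k) = lam k • φ k)
    (a b c m : ℝ)
    (hm : ∀ k, lam k ∉ Set.Icc a b → m ≤ |lam k - (a + b) / 2|) :
    ∃ c' : ℝ, 0 < c' ∧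
      ∀ B : H →L[ℝ] H, IsSelfAdjoint B →
        ‖B - ((a + b) / 2) • ContinuousLinearMap.id ℝ H‖ ≤ c →
        ∀ h ∈ (Submodule.span ℝ (φ '' {k | lam k ∈ Set.Icc a b}))ᗮ,
          (m - c) * c' * ‖h‖ ≤
            ‖(Submodule.orthogonalProjectionOnto
                (Submodule.span ℝ (φ '' {k | lam k ∈ Set.Icc a b}))ᗮ
                ((A - B) h) : H)‖ := by
  obtain ⟨e, rfl⟩ : ∃ e : HilbertBasis ℕ ℝ H, ⇑e = φ :=
    ⟨HilbertBasis.mk hortho hcomplete.ge, HilbertBasis.coe_mk _ _⟩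
  set γ := (a + b) / 2
  set T := A - γ • ContinuousLinearMap.id ℝ H
  have hTsa : IsSelfAdjoint T := hAsa.sub (.smul (.all γ) (.one _))
  have hTe : ∀ k, T (e k) = (lam k - γ) • e k := fun k => by simp [T, hA, sub_smul]
  have hinv := ContinuousLinearMap.orthogonal_mem_invtSubmodule
    (hTsa.adjoint_eq ▸ span_image_mem_invtSubmodule hTe {k | lam k ∈ Set.Icc a b})
  refine ⟨1, one_pos, fun B _ hB h hh => ?_⟩
  have hbound := sub_mul_norm_le_norm_starProjection_sub_apply hinv
    (fun h hh => e.mul_norm_le_norm_apply_of_mem_orthogonal_span hTsa.isSymmetric hTe hm hh)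
    (B - γ • ContinuousLinearMap.id ℝ H) hh
  rw [sub_sub_sub_cancel_right] at hbound
  calc (m - c) * 1 * ‖h‖ ≤ (m - ‖B - γ • ContinuousLinearMap.id ℝ H‖) * ‖h‖ := by
        rw [mul_one]; gcongr
    _ ≤ _ := hbound

/-- abstract spectral-gap coercivity: let `H` be a Hilbert
space, `(φ_k)` an orthonormal basis of eigenvectors of a positive self-adjoint
operator `A` with eigenvalues `0 < λ₁ ≤ λ₂ ≤ …`, `[a,b]` an interval,
`γ = (a+b)/2`, and `c < m ≤ min {|λ_k − γ| : λ_k ∉ [a,b]}`. Let `W` be the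
closed span of `{φ_k : λ_k ∉ [a,b]}` (equivalently, `span{φ_k : λ_k ∈ [a,b]}ᗮ`)
and `P_W` the orthogonal projection onto `W`. Then there is `c' > 0`,
depending only on the spectrum, such that for every bounded self-adjoint `B`
with `‖B − γI‖ ≤ c` and every `h ∈ W`,
`‖P_W (A − B) h‖ ≥ (m − c) · c' · ‖h‖`. -/
theorem abstract_spectral_gap_coercivity {H : Type*}
    [NormedAddCommGroup H] [InnerProductSpace ℝ H] [CompleteSpace H]
    (φ : ℕ → H) (hortho : Orthonormal ℝ φ)
    (hcomplete : (Submodule.span ℝ (Set.range φ)).topologicalClosure = ⊤)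
    (lam : ℕ → ℝ) (hpos : ∀ k, 0 < lam k) (hmono : Monotone lam)
    (A : H →L[ℝ] H) (hAsa : IsSelfAdjoint A)
    (hA : ∀ k, A (φ k) = lam k • φ k)
    (a b c m : ℝ) (hab : a ≤ b) (hc0 : 0 ≤ c)
    (hm : ∀ k, lam k ∉ Set.Icc a b → m ≤ |lam k - (a + b) / 2|)
    (hcm : c < m) :
    ∃ c' : ℝ, 0 < c' ∧
      ∀ B : H →L[ℝ] H, IsSelfAdjoint B →
        ‖B - ((a + b) / 2) • ContinuousLinearMap.id ℝ H‖ ≤ c →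
        ∀ h ∈ (Submodule.span ℝ (φ '' {k | lam k ∈ Set.Icc a b}))ᗮ,
          (m - c) * c' * ‖h‖ ≤
            ‖(Submodule.orthogonalProjectionOnto
                (Submodule.span ℝ (φ '' {k | lam k ∈ Set.Icc a b}))ᗮ
                ((A - B) h) : H)‖ :=
  abstract_spectral_gap_coercivity_general φ hortho hcomplete lam A hAsa hA a b c m hm
end

section
/- Let F : X → Y be flat and suppose dim V_X = dim V_Y = d < ∞. Then solving F(x) = g for given g ∈ Y is equivalent to solving the d-dimensional equation 𝓕_g(v) = Q_Y g, where 𝓕_g : V_X → V_Y is 𝓕_g = Q_Y ∘ F ∘ H_g and H_g(v) = v + (F_v)⁻¹(P_Y g). Precisely: x solves F(x) = g if and only if x = H_g(v) for some v ∈ V_X with 𝓕_g(v) = Q_Y g. -/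
/- Product model of the Banach space decompositions `X = W_X ⊕ V_X` and
`Y = W_Y ⊕ V_Y`: `X = W × V`, `Y = W' × V'`, with `P_X = Prod.fst`,
`Q_X = Prod.snd`, `P_Y = Prod.fst`, `Q_Y = Prod.snd`. -/
variable {W V W' V' : Type*}
  [NormedAddCommGroup W] [NormedSpace ℝ W] [CompleteSpace W]
  [NormedAddCommGroup V] [NormedSpace ℝ V] [CompleteSpace V]
  [NormedAddCommGroup W'] [NormedSpace ℝ W'] [CompleteSpace W']
  [NormedAddCommGroup V'] [NormedSpace ℝ V'] [CompleteSpace V']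

/-! The projected restriction `F_v` is a bijection with inverse `G v`, so `P_Y F(w, v) = P_Y g`
holds exactly when `w = F_v⁻¹(P_Y g)`: the fiber `F⁻¹(g + V_Y)` is the image of `H_g`, and on it
`F(x) = g` reduces to the remaining `V_Y`-component. -/

theorem fst_apply_eq_iff_of_inverse {α β γ δ : Type*} {F : α × β → γ × δ} {G : γ → α}
    {x : α × β} (hL : Function.LeftInverse G fun w => (F (w, x.2)).1)
    (hR : Function.RightInverse G fun w => (F (w, x.2)).1) {c : γ} :
    (F x).1 = c ↔ x = (G c, x.2) := by
  constructor
  · rintro rfl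
    exact Prod.ext (hL x.1).symm rfl
  · intro hx
    rw [hx]
    exact hR c

theorem finiteDimensional_reduction_general (F : W × V → W' × V') (G : V → W' → W)
    (hF : IsFlat F G)
    (g : W' × V') :
    ∀ x : W × V, F x = g ↔
      ∃ v : V, x = (G v g.1, v) ∧ (F (G v g.1, v)).2 = g.2 := by
  intro x
  obtain ⟨-, -, hL, hR⟩ := hF.2 x.2
  rw [Prod.ext_iff, fst_apply_eq_iff_of_inverse hL hR]
  constructor
  · rintro ⟨hx, hx₂⟩
    exact ⟨x.2, hx, by rwa [← hx]⟩
  · rintro ⟨v, rfl, hv⟩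
    exact ⟨rfl, hv⟩

/-- for a flat map `F` with `dim V_X = dim V_Y = d < ∞`, solving
`F(x) = g` is equivalent to the `d`-dimensional equation `𝓕_g(v) = Q_Y g`,
where `𝓕_g = Q_Y ∘ F ∘ H_g` and `H_g(v) = v + F_v⁻¹(P_Y g)`: `x` solves
`F(x) = g` iff `x = H_g(v)` for some `v ∈ V_X` with `𝓕_g(v) = Q_Y g`. -/
theorem finiteDimensional_reduction (F : W × V → W' × V') (G : V → W' → W)
    (hF : IsFlat F G)
    [FiniteDimensional ℝ V] [FiniteDimensional ℝ V']
    (hd : Module.finrank ℝ V = Module.finrank ℝ V')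
    (g : W' × V') :
    ∀ x : W × V, F x = g ↔
      ∃ v : V, x = (G v g.1, v) ∧ (F (G v g.1, v)).2 = g.2 :=
  finiteDimensional_reduction_general F G hF g
end
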